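/- arXiv:1711.02139 — 7 statements merged into one kernel-verified Lean document; each statement's English description precedes it below -/
import Mathlib

section
/- Let 𝔤 be a Lie algebra over a field F of characteristic zero with involution θ and eigenspaces 𝔤(±1). If (e, f, h) is an sl₂-triple with e ∈ 𝔤(−1) and h ∈ 𝔤(1), and f = f₁ + f₋₁ is the eigenspace decomposition of f, then (e, f₋₁, h) is also an sl₂-triple, i.e. [e, f₋₁] = h, [h, f₋₁] = −2f₋₁, and [h, e] = 2e. -/
/-!
Since `θ` is a Lie algebra morphism, bracketing with `e ∈ 𝔤(-1)` swaps the eigenspaces `𝔤(±1)`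
while bracketing with `h ∈ 𝔤(1)` preserves them. So `[e, f] = h` and `[h, f] = -2f` split into
their `𝔤(1)`- and `𝔤(-1)`-components, and the decomposition `𝔤(1) ⊕ 𝔤(-1)` is unique once `2`
is invertible; comparing components gives `[e, f₋₁] = h` and `[h, f₋₁] = -2f₋₁`.
-/

theorem add_eq_add_iff_of_map_eq_self_of_map_eq_neg {R M : Type*} [Ring R] [Invertible (2 : R)]
    [AddCommGroup M] [Module R M] (θ : M →ₗ[R] M) {a b c d : M}
    (ha : θ a = a) (hb : θ b = -b) (hc : θ c = c) (hd : θ d = -d) :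
    a + b = c + d ↔ a = c ∧ b = d := by
  refine ⟨fun h ↦ ?_, fun ⟨hac, hbd⟩ ↦ hac ▸ hbd ▸ rfl⟩
  have h' : a - b = c - d := by
    simpa [ha, hb, hc, hd, sub_eq_add_neg] using congrArg θ h
  have hac : a = c := by
    rw [← (isUnit_of_invertible (2 : R)).smul_left_cancel, two_smul, two_smul]
    linear_combination (norm := module) h + h'
  exact ⟨hac, add_left_cancel (hac ▸ h)⟩

theorem sl2_triple_replace_f_by_odd_part_general
    (F : Type*) [Field F] [CharZero F]
    (L : Type*) [LieRing L] [LieAlgebra F L]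
    (θ : L →ₗ⁅F⁆ L)
    (e f h f₁ fm₁ : L)
    (t1 : ⁅h, e⁆ = (2 : F) • e) (t2 : ⁅h, f⁆ = -((2 : F) • f))
    (t3 : ⁅e, f⁆ = h)
    (hee : θ e = -e) (hhh : θ h = h)
    (hdec : f = f₁ + fm₁) (hf1 : θ f₁ = f₁) (hfm1 : θ fm₁ = -fm₁) :
    ⁅e, fm₁⁆ = h ∧ ⁅h, fm₁⁆ = -((2 : F) • fm₁) ∧ ⁅h, e⁆ = (2 : F) • e := by
  have hθ_lie (x y : L) : θ ⁅x, y⁆ = ⁅θ x, θ y⁆ := LieHom.map_lie θ x y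
  have he_f : ⁅e, fm₁⁆ + ⁅e, f₁⁆ = h + 0 := by
    rw [add_comm, ← lie_add, ← hdec, t3, add_zero]
  have hh_f : ⁅h, f₁⁆ + ⁅h, fm₁⁆ = -((2 : F) • f₁) + -((2 : F) • fm₁) := by
    rw [← lie_add, ← hdec, t2, hdec, smul_add, neg_add]
  obtain ⟨he_fm₁, -⟩ := (add_eq_add_iff_of_map_eq_self_of_map_eq_neg (θ : L →ₗ[F] L)
    (by simp [hθ_lie, hee, hfm1]) (by simp [hθ_lie, hee, hf1]) hhh (by simp)).mp he_f
  obtain ⟨-, hh_fm₁⟩ := (add_eq_add_iff_of_map_eq_self_of_map_eq_neg (θ : L →ₗ[F] L)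
    (by simp [hθ_lie, hhh, hf1]) (by simp [hθ_lie, hhh, hfm1]) (by simp [hf1])
    (by simp [hfm1])).mp hh_f
  exact ⟨he_fm₁, hh_fm₁, t1⟩

/-- if (e, f, h) is an sl₂-triple with e ∈ 𝔤(−1) and h ∈ 𝔤(1), and
f = f₁ + f₋₁ is the eigenspace decomposition of f, then (e, f₋₁, h) is again an
sl₂-triple. -/
theorem sl2_triple_replace_f_by_odd_part
    (F : Type*) [Field F] [CharZero F]
    (L : Type*) [LieRing L] [LieAlgebra F L]
    (θ : L →ₗ⁅F⁆ L) (hθ : ∀ x, θ (θ x) = x)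
    (e f h f₁ fm₁ : L)
    (he0 : e ≠ 0) (hf0 : f ≠ 0) (hh0 : h ≠ 0)
    (t1 : ⁅h, e⁆ = (2 : F) • e) (t2 : ⁅h, f⁆ = -((2 : F) • f))
    (t3 : ⁅e, f⁆ = h)
    (hee : θ e = -e) (hhh : θ h = h)
    (hdec : f = f₁ + fm₁) (hf1 : θ f₁ = f₁) (hfm1 : θ fm₁ = -fm₁) :
    ⁅e, fm₁⁆ = h ∧ ⁅h, fm₁⁆ = -((2 : F) • fm₁) ∧ ⁅h, e⁆ = (2 : F) • e :=
  sl2_triple_replace_f_by_odd_part_general F L θ e f h f₁ fm₁ t1 t2 t3 hee hhh hdec hf1 hfm1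
end

section
/- Let p ≥ q ≥ 1, n = p + q, and let e ∈ M_n(F) be the block matrix with upper-right p×q block equal to (1_q stacked over the (p−q)×q zero matrix) and lower-left q×p block equal to (0_{q,1} | 1_q | 0_{q,p−q−1}) (for p > q; for p = q the lower-left block is the nilpotent shift ε_q). Then e is nilpotent, i.e. e^N = 0 for some N. -/
open Matrix

/-- the element e ∈ 𝔤𝔩_{p+q}(F), with upper-right p×q block
(1_q over 0_{p−q,q}) and lower-left q×p block (0_{q,1} | 1_q | 0_{q,p−q−1})
(which for p = q is the shift ε_q), is nilpotent. -/
theorem gl_nilpotent_element_isNilpotent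
    (F : Type*) [Field F] [CharZero F] (p q : ℕ) (hq : 0 < q) (hpq : q ≤ p) :
    let A : Matrix (Fin p) (Fin q) F := fun i j => if (i : ℕ) = (j : ℕ) then 1 else 0
    let B : Matrix (Fin q) (Fin p) F := fun i j => if (j : ℕ) = (i : ℕ) + 1 then 1 else 0
    let e : Matrix (Fin p ⊕ Fin q) (Fin p ⊕ Fin q) F := Matrix.fromBlocks 0 A B 0
    IsNilpotent e := by
  intro A B e
  set f : Fin p ⊕ Fin q → ℕ := fun x => match x with
    | Sum.inl i => 2 * (i : ℕ)
    | Sum.inr j => 2 * (j : ℕ) + 1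
    with hf
  have base : ∀ x y, e x y ≠ 0 → f x < f y := by
    rintro (i | i) (j | j) h
    · simp [e, A, B, fromBlocks] at h
    · simp only [e, A, fromBlocks, Sum.elim_inl, Sum.elim_inr, of_apply] at h
      by_cases hij : (i : ℕ) = (j : ℕ)
      · show 2 * (i : ℕ) < 2 * (j : ℕ) + 1; omega
      · simp [hij] at h
    · simp only [e, B, fromBlocks, Sum.elim_inl, Sum.elim_inr, of_apply] at h
      by_cases hij : (j : ℕ) = (i : ℕ) + 1
      · show 2 * (i : ℕ) + 1 < 2 * (j : ℕ); omega
      · simp [hij] at h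
    · simp [e, fromBlocks] at h
  have step : ∀ k x y, (e ^ k) x y ≠ 0 → f x + k ≤ f y := by
    intro k
    induction k with
    | zero =>
        intro x y h
        simp only [pow_zero, Matrix.one_apply, ne_eq, ite_eq_right_iff, not_forall] at h
        obtain ⟨rfl, -⟩ := h; omega
    | succ k ih =>
        intro x y h
        rw [pow_succ, Matrix.mul_apply] at h
        obtain ⟨z, hz⟩ := Finset.exists_ne_zero_of_sum_ne_zero h
        have h1 : (e ^ k) x z ≠ 0 := fun h0 => hz.2 (by simp [h0])
        have h2 : e z y ≠ 0 := fun h0 => hz.2 (by simp [h0])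
        have := ih x z h1
        have := base z y h2
        omega
  refine ⟨2 * (p + q), ?_⟩
  ext x y
  by_contra h
  have hy : f y < 2 * (p + q) := by
    rcases y with j | j
    · have := j.2; show 2 * (j : ℕ) < 2 * (p + q); omega
    · have := j.2; show 2 * (j : ℕ) + 1 < 2 * (p + q); omega
  have := step (2 * (p + q)) x y (by simpa using h)
  omega
end

section
/- Let p ≥ q ≥ 1, n = p + q, F a field of characteristic zero. Let e ∈ 𝔤𝔩_n(F) be the block matrix with upper-right p×q block (1_q over 0_{p−q,q}) and lower-left q×p block (0_{q,1} | 1_q | 0_{q,p−q−1}). Let V = {X = [[0,A],[B,0]] : A ∈ M_{p,q}(F), B ∈ M_{q,p}(F)} be the −1 eigenspace of conjugation by I_{p,q}. Then the centralizer {X ∈ V : [e, X] = 0} is an F-vector space of dimension q. -/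
open Matrix

namespace GLC

/-- Sum of an indicator-supported function over `Fin m`. -/
lemma sum_ite_coe {M : Type*} [AddCommMonoid M] {m : ℕ} (f : Fin m → M) (a : ℕ) :
    (∑ l : Fin m, if (l : ℕ) = a then f l else 0) = if h : a < m then f ⟨a, h⟩ else 0 := by
  split_ifs with h
  · rw [Finset.sum_eq_single ⟨a, h⟩]
    · simp
    · intro l _ hl
      exact if_neg fun hc => hl (Fin.ext hc)
    · exact fun h' => absurd (Finset.mem_univ _) h'
  · refine Finset.sum_eq_zero fun l _ => if_neg fun hc => ?_
    exact h (hc ▸ l.isLt)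

variable (F : Type*) [Field F] (p q : ℕ)

def A0 : Matrix (Fin p) (Fin q) F := fun i j => if (i : ℕ) = (j : ℕ) then 1 else 0
def B0 : Matrix (Fin q) (Fin p) F := fun i j => if (j : ℕ) = (i : ℕ) + 1 then 1 else 0
def Jpq : Matrix (Fin p ⊕ Fin q) (Fin p ⊕ Fin q) F := fromBlocks 1 0 0 (-1)
def Ee : Matrix (Fin p ⊕ Fin q) (Fin p ⊕ Fin q) F := fromBlocks 0 (A0 F p q) (B0 F p q) 0
def Ak (k : Fin q) : Matrix (Fin p) (Fin q) F :=
  fun i j => if (j : ℕ) = (i : ℕ) + (k : ℕ) then 1 else 0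
def Bk (k : Fin q) : Matrix (Fin q) (Fin p) F :=
  fun i j => if (j : ℕ) = (i : ℕ) + (k : ℕ) + 1 ∧ (j : ℕ) ≤ q then 1 else 0
def EE (k : Fin q) : Matrix (Fin p ⊕ Fin q) (Fin p ⊕ Fin q) F :=
  fromBlocks 0 (Ak F p q k) (Bk F p q k) 0

lemma blk1 (hpq : q ≤ p) (k : Fin q) : A0 F p q * Bk F p q k = Ak F p q k * B0 F p q := by
  ext i j
  rw [mul_apply, mul_apply]
  have e1 : (∑ l : Fin q, A0 F p q i l * Bk F p q k l j)
      = ∑ l : Fin q, (if (l : ℕ) = (i : ℕ) then Bk F p q k l j else 0) :=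
    Finset.sum_congr rfl fun l _ => by
      simp only [A0]
      split_ifs <;> first | (exfalso; omega) | rw [one_mul] | rw [zero_mul]
  have e2 : (∑ l : Fin q, Ak F p q k i l * B0 F p q l j)
      = ∑ l : Fin q, (if (l : ℕ) = (i : ℕ) + (k : ℕ)
          then (if (j : ℕ) = (l : ℕ) + 1 then (1:F) else 0) else 0) :=
    Finset.sum_congr rfl fun l _ => by
      simp only [Ak, B0]
      split_ifs <;> first | (exfalso; omega) | ring1
  rw [e1, e2, sum_ite_coe, sum_ite_coe]
  simp only [Bk, Fin.val_mk]
  have hj := j.isLt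
  split_ifs <;> first | rfl | (exfalso; omega)

lemma blk2 (hpq : q ≤ p) (k : Fin q) : B0 F p q * Ak F p q k = Bk F p q k * A0 F p q := by
  ext i j
  rw [mul_apply, mul_apply]
  have e1 : (∑ l : Fin p, B0 F p q i l * Ak F p q k l j)
      = ∑ l : Fin p, (if (l : ℕ) = (i : ℕ) + 1
          then (if (j : ℕ) = (l : ℕ) + (k : ℕ) then (1:F) else 0) else 0) :=
    Finset.sum_congr rfl fun l _ => by
      simp only [Ak, B0]
      split_ifs <;> first | (exfalso; omega) | ring1
  have e2 : (∑ l : Fin p, Bk F p q k i l * A0 F p q l j)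
      = ∑ l : Fin p, (if (l : ℕ) = (i : ℕ) + (k : ℕ) + 1
          then (if (l : ℕ) ≤ q ∧ (l : ℕ) = (j : ℕ) then (1:F) else 0) else 0) :=
    Finset.sum_congr rfl fun l _ => by
      simp only [Bk, A0]
      split_ifs <;> first | (exfalso; omega) | ring1
  rw [e1, e2, sum_ite_coe, sum_ite_coe]
  have hj := j.isLt
  have hi := i.isLt
  simp only [Fin.val_mk]
  split_ifs <;> first | rfl | (exfalso; omega)

lemma comm_EE (hpq : q ≤ p) (k : Fin q) :
    Ee F p q * EE F p q k = EE F p q k * Ee F p q := by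
  simp only [Ee, EE, fromBlocks_multiply, Matrix.zero_mul, Matrix.mul_zero, add_zero, zero_add]
  rw [blk1 F p q hpq k, blk2 F p q hpq k]


lemma theta_EE (k : Fin q) :
    Jpq F p q * (EE F p q k * Jpq F p q) = (-1 : F) • EE F p q k := by
  simp only [Jpq, EE, fromBlocks_multiply, Matrix.zero_mul, Matrix.mul_zero, Matrix.mul_one,
    Matrix.one_mul, add_zero, zero_add, Matrix.mul_neg, Matrix.neg_mul, neg_zero,
    neg_smul, one_smul, Matrix.fromBlocks_neg, neg_zero]

def Phi : (Fin q → F) →ₗ[F] Matrix (Fin p ⊕ Fin q) (Fin p ⊕ Fin q) F where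
  toFun c := ∑ k, c k • EE F p q k
  map_add' c d := by
    simp only [add_smul, Pi.add_apply]
    rw [Finset.sum_add_distrib]
  map_smul' r c := by
    simp [Finset.smul_sum, mul_smul]

lemma Phi_inl_inl (c : Fin q → F) (i j : Fin p) :
    Phi F p q c (Sum.inl i) (Sum.inl j) = 0 := by
  simp [Phi, EE, Matrix.sum_apply]

lemma Phi_inr_inr (c : Fin q → F) (i j : Fin q) :
    Phi F p q c (Sum.inr i) (Sum.inr j) = 0 := by
  simp [Phi, EE, Matrix.sum_apply]

lemma Phi_inl_inr (c : Fin q → F) (i : Fin p) (j : Fin q) :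
    Phi F p q c (Sum.inl i) (Sum.inr j)
      = if h : (i : ℕ) ≤ (j : ℕ) then c ⟨(j : ℕ) - (i : ℕ), by have := j.isLt; omega⟩
        else 0 := by
  have e0 : Phi F p q c (Sum.inl i) (Sum.inr j) = ∑ k : Fin q, c k * Ak F p q k i j := by
    simp [Phi, EE, Matrix.sum_apply]
  rw [e0]
  rcases le_or_gt (i : ℕ) (j : ℕ) with hij | hij
  · rw [dif_pos hij]
    have e1 : (∑ k : Fin q, c k * Ak F p q k i j)
        = ∑ k : Fin q, (if (k : ℕ) = (j : ℕ) - (i : ℕ) then c k else 0) :=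
      Finset.sum_congr rfl fun k _ => by
        simp only [Ak, mul_ite, mul_one, mul_zero]
        split_ifs <;> first | (exfalso; omega) | rfl
    rw [e1, sum_ite_coe, dif_pos (show (j : ℕ) - (i : ℕ) < q by have := j.isLt; omega)]
  · rw [dif_neg (by omega)]
    refine Finset.sum_eq_zero fun k _ => ?_
    simp only [Ak, mul_ite, mul_one, mul_zero]
    rw [if_neg (by omega)]

lemma Phi_inr_inl (c : Fin q → F) (i : Fin q) (j : Fin p) :
    Phi F p q c (Sum.inr i) (Sum.inl j)
      = if h : (i : ℕ) + 1 ≤ (j : ℕ) ∧ (j : ℕ) ≤ q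
        then c ⟨(j : ℕ) - 1 - (i : ℕ), by have := i.isLt; omega⟩ else 0 := by
  have e0 : Phi F p q c (Sum.inr i) (Sum.inl j) = ∑ k : Fin q, c k * Bk F p q k i j := by
    simp [Phi, EE, Matrix.sum_apply]
  rw [e0]
  by_cases hij : (i : ℕ) + 1 ≤ (j : ℕ) ∧ (j : ℕ) ≤ q
  · rw [dif_pos hij]
    have e1 : (∑ k : Fin q, c k * Bk F p q k i j)
        = ∑ k : Fin q, (if (k : ℕ) = (j : ℕ) - 1 - (i : ℕ) then c k else 0) :=
      Finset.sum_congr rfl fun k _ => by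
        simp only [Bk, mul_ite, mul_one, mul_zero]
        split_ifs <;> first | (exfalso; omega) | rfl
    rw [e1, sum_ite_coe, dif_pos (show (j : ℕ) - 1 - (i : ℕ) < q by have := i.isLt; omega)]
  · rw [dif_neg hij]
    refine Finset.sum_eq_zero fun k _ => ?_
    simp only [Bk, mul_ite, mul_one, mul_zero]
    rw [if_neg (by omega)]

theorem main (F : Type*) [Field F] [CharZero F] (p q : ℕ) (hq : 0 < q) (hpq : q ≤ p) :
    Module.finrank F ↥(Module.End.eigenspace
        ((LinearMap.mulLeft F (Jpq F p q)).comp (LinearMap.mulRight F (Jpq F p q))) (-1)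
      ⊓ LinearMap.ker (LinearMap.mulLeft F (Ee F p q) - LinearMap.mulRight F (Ee F p q))) = q := by
  have hp : 0 < p := lt_of_lt_of_le hq hpq
  set S := (Module.End.eigenspace
        ((LinearMap.mulLeft F (Jpq F p q)).comp (LinearMap.mulRight F (Jpq F p q))) (-1)
      ⊓ LinearMap.ker (LinearMap.mulLeft F (Ee F p q) - LinearMap.mulRight F (Ee F p q))) with hS
  have memS : ∀ X : Matrix (Fin p ⊕ Fin q) (Fin p ⊕ Fin q) F,
      X ∈ S ↔ (Jpq F p q * (X * Jpq F p q) = (-1 : F) • X ∧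
        Ee F p q * X = X * Ee F p q) := by
    intro X
    rw [hS, Submodule.mem_inf, Module.End.mem_eigenspace_iff, LinearMap.mem_ker]
    simp only [LinearMap.comp_apply, LinearMap.mulLeft_apply, LinearMap.mulRight_apply,
      LinearMap.sub_apply, sub_eq_zero]
  have hEEmem : ∀ k, EE F p q k ∈ S := fun k =>
    (memS _).mpr ⟨theta_EE F p q k, comm_EE F p q hpq k⟩
  have hinj : Function.Injective (Phi F p q) := by
    rw [← LinearMap.ker_eq_bot (M := Fin q → F)]
    rw [eq_bot_iff]
    intro c hc
    simp only [LinearMap.mem_ker] at hc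
    have hc0 : c = 0 := by
      funext j
      have h0 := Matrix.ext_iff.mpr hc (Sum.inl ⟨0, hp⟩) (Sum.inr j)
      rw [Phi_inl_inr, dif_pos (Nat.zero_le _)] at h0
      have hj : (⟨(j : ℕ) - 0, by have := j.isLt; omega⟩ : Fin q) = j := Fin.ext (by simp)
      rw [hj] at h0
      simpa using h0
    simp [hc0]
  have hr1 : LinearMap.range (Phi F p q) ≤ S := by
    rintro X hX
    obtain ⟨c, rfl⟩ := hX
    show (∑ k : Fin q, c k • EE F p q k) ∈ S
    exact Submodule.sum_mem _ fun k _ => Submodule.smul_mem _ _ (hEEmem k)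
  have hr2 : S ≤ LinearMap.range (Phi F p q) := by
    intro X hX
    obtain ⟨hθX, hcX⟩ := (memS X).mp hX
    set W := X.toBlocks₁₁ with hWdef
    set A' := X.toBlocks₁₂ with hAdef
    set B' := X.toBlocks₂₁ with hBdef
    set Z := X.toBlocks₂₂ with hZdef
    have hXb : X = fromBlocks W A' B' Z := (fromBlocks_toBlocks X).symm
    rw [hXb] at hθX
    simp only [Jpq, fromBlocks_multiply, Matrix.zero_mul, Matrix.mul_zero, Matrix.mul_one,
      Matrix.one_mul, add_zero, zero_add, Matrix.mul_neg, Matrix.neg_mul, neg_zero,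
      neg_smul, one_smul, neg_neg, Matrix.fromBlocks_neg] at hθX
    have h11 : W = -W := by
      have := congrArg Matrix.toBlocks₁₁ hθX
      simpa only [Matrix.toBlocks_fromBlocks₁₁] using this
    have h22 : Z = -Z := by
      have := congrArg Matrix.toBlocks₂₂ hθX
      simpa only [Matrix.toBlocks_fromBlocks₂₂] using this
    have hW0 : W = 0 := by
      have h2 : (2 : F) • W = 0 := by
        rw [two_smul]
        nth_rewrite 2 [h11]
        simp
      rcases smul_eq_zero.mp h2 with h | h
      · exact absurd h two_ne_zero
      · exact h
    have hZ0 : Z = 0 := by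
      have h2 : (2 : F) • Z = 0 := by
        rw [two_smul]
        nth_rewrite 2 [h22]
        simp
      rcases smul_eq_zero.mp h2 with h | h
      · exact absurd h two_ne_zero
      · exact h
    rw [hXb, hW0, hZ0] at hcX
    simp only [Ee, fromBlocks_multiply, Matrix.zero_mul, Matrix.mul_zero, add_zero,
      zero_add] at hcX
    have h1 : A0 F p q * B' = A' * B0 F p q := by
      have := congrArg Matrix.toBlocks₁₁ hcX
      simpa only [Matrix.toBlocks_fromBlocks₁₁] using this
    have h2c : B0 F p q * A' = B' * A0 F p q := by
      have := congrArg Matrix.toBlocks₂₂ hcX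
      simpa only [Matrix.toBlocks_fromBlocks₂₂] using this
    have E1 : ∀ (i j : Fin p), (if h : (i : ℕ) < q then B' ⟨(i : ℕ), h⟩ j else 0)
        = (if h : (j : ℕ) - 1 < q
            then (if 1 ≤ (j : ℕ) then A' i ⟨(j : ℕ) - 1, h⟩ else 0) else 0) := by
      intro i j
      have h0 : (A0 F p q * B') i j = (A' * B0 F p q) i j := by rw [h1]
      rw [mul_apply, mul_apply] at h0
      have eL : (∑ l : Fin q, A0 F p q i l * B' l j)
          = ∑ l : Fin q, (if (l : ℕ) = (i : ℕ) then B' l j else 0) :=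
        Finset.sum_congr rfl fun l _ => by
          simp only [A0]
          split_ifs <;> first | (exfalso; omega) | rw [one_mul] | rw [zero_mul]
      have eR : (∑ l : Fin q, A' i l * B0 F p q l j)
          = ∑ l : Fin q, (if (l : ℕ) = (j : ℕ) - 1
              then (if 1 ≤ (j : ℕ) then A' i l else 0) else 0) :=
        Finset.sum_congr rfl fun l _ => by
          simp only [B0, mul_ite, mul_one, mul_zero]
          split_ifs <;> first | (exfalso; omega) | rfl
      rw [eL, eR, sum_ite_coe, sum_ite_coe] at h0
      exact h0
    have E2 : ∀ (i j : Fin q), (if h : (i : ℕ) + 1 < p then A' ⟨(i : ℕ) + 1, h⟩ j else 0)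
        = (if h : (j : ℕ) < p then B' i ⟨(j : ℕ), h⟩ else 0) := by
      intro i j
      have h0 : (B0 F p q * A') i j = (B' * A0 F p q) i j := by rw [h2c]
      rw [mul_apply, mul_apply] at h0
      have eL : (∑ l : Fin p, B0 F p q i l * A' l j)
          = ∑ l : Fin p, (if (l : ℕ) = (i : ℕ) + 1 then A' l j else 0) :=
        Finset.sum_congr rfl fun l _ => by
          simp only [B0]
          split_ifs <;> first | (exfalso; omega) | rw [one_mul] | rw [zero_mul]
      have eR : (∑ l : Fin p, B' i l * A0 F p q l j)
          = ∑ l : Fin p, (if (l : ℕ) = (j : ℕ) then B' i l else 0) :=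
        Finset.sum_congr rfl fun l _ => by
          simp only [A0, mul_ite, mul_one, mul_zero]
      rw [eL, eR, sum_ite_coe, sum_ite_coe] at h0
      exact h0
    set c : Fin q → F := fun j => A' ⟨0, hp⟩ j with hcdef
    have hrow : ∀ (i : Fin p), q ≤ (i : ℕ) → ∀ j : Fin q, A' i j = 0 := by
      intro i hi j
      have hjp : (j : ℕ) + 1 < p := by have := i.isLt; have := j.isLt; omega
      have h0 : (if h : (i : ℕ) < q then B' ⟨(i : ℕ), h⟩ ⟨(j : ℕ) + 1, hjp⟩ else 0)
          = (if h : (j : ℕ) < q then (if 1 ≤ (j : ℕ) + 1 then A' i j else 0) else 0) :=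
        E1 i ⟨(j : ℕ) + 1, hjp⟩
      rw [dif_neg (by omega), dif_pos j.isLt, if_pos (by omega)] at h0
      exact h0.symm
    have hA : ∀ (m : ℕ) (hm : m < p) (j : Fin q),
        A' ⟨m, hm⟩ j = if h : m ≤ (j : ℕ)
          then c ⟨(j : ℕ) - m, by have := j.isLt; omega⟩ else 0 := by
      intro m
      induction m with
      | zero =>
        intro hm j
        rw [dif_pos (Nat.zero_le _)]
        rfl
      | succ m ih =>
        intro hm j
        by_cases hmq : m < q
        · have hE2 : (if h : m + 1 < p then A' ⟨m + 1, h⟩ j else 0)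
              = (if h : (j : ℕ) < p then B' ⟨m, hmq⟩ ⟨(j : ℕ), h⟩ else 0) := E2 ⟨m, hmq⟩ j
          rw [dif_pos hm, dif_pos (lt_of_lt_of_le j.isLt hpq)] at hE2
          have hE1 : (if h : m < q then B' ⟨m, h⟩ ⟨(j : ℕ), lt_of_lt_of_le j.isLt hpq⟩ else 0)
              = (if h : (j : ℕ) - 1 < q
                  then (if 1 ≤ (j : ℕ)
                    then A' ⟨m, lt_of_lt_of_le hmq hpq⟩ ⟨(j : ℕ) - 1, h⟩ else 0) else 0) :=
            E1 ⟨m, lt_of_lt_of_le hmq hpq⟩ ⟨(j : ℕ), lt_of_lt_of_le j.isLt hpq⟩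
          rw [dif_pos hmq, dif_pos (by have := j.isLt; omega)] at hE1
          rw [hE2, hE1]
          by_cases hj1 : 1 ≤ (j : ℕ)
          · rw [if_pos hj1]
            have hAm : A' ⟨m, lt_of_lt_of_le hmq hpq⟩ ⟨(j : ℕ) - 1, by have := j.isLt; omega⟩
                = if h : m ≤ (j : ℕ) - 1
                  then c ⟨(j : ℕ) - 1 - m, by have := j.isLt; omega⟩ else 0 := ih _ _
            rw [hAm]
            split_ifs <;>
              first | (exfalso; omega) | rfl | (congr 1; exact Fin.ext (show (j : ℕ) - 1 - m = (j : ℕ) - (m + 1) by omega))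
          · rw [if_neg hj1, dif_neg (by omega)]
        · rw [hrow ⟨m + 1, hm⟩ (show q ≤ m + 1 by omega) j, dif_neg (by have := j.isLt; omega)]
    have hBf : ∀ (i : Fin q) (j : Fin p),
        B' i j = if h : (i : ℕ) + 1 ≤ (j : ℕ) ∧ (j : ℕ) ≤ q
          then c ⟨(j : ℕ) - 1 - (i : ℕ), by have := i.isLt; omega⟩ else 0 := by
      intro i j
      have hE1 : (if h : (i : ℕ) < q then B' i j else 0)
          = (if h : (j : ℕ) - 1 < q
              then (if 1 ≤ (j : ℕ)
                then A' ⟨(i : ℕ), lt_of_lt_of_le i.isLt hpq⟩ ⟨(j : ℕ) - 1, h⟩ else 0) else 0) :=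
        E1 ⟨(i : ℕ), lt_of_lt_of_le i.isLt hpq⟩ j
      rw [dif_pos i.isLt] at hE1
      rw [hE1]
      by_cases hcase : (i : ℕ) + 1 ≤ (j : ℕ) ∧ (j : ℕ) ≤ q
      · rw [dif_pos (by omega), if_pos (by omega), dif_pos hcase]
        have hAm : A' ⟨(i : ℕ), lt_of_lt_of_le i.isLt hpq⟩ ⟨(j : ℕ) - 1, by omega⟩
            = if h : (i : ℕ) ≤ (j : ℕ) - 1
              then c ⟨(j : ℕ) - 1 - (i : ℕ), by omega⟩ else 0 := hA _ _ _
        rw [hAm, dif_pos (by omega)]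
      · rw [dif_neg hcase]
        split_ifs with hd1 hd2
        · have hAm : A' ⟨(i : ℕ), lt_of_lt_of_le i.isLt hpq⟩ ⟨(j : ℕ) - 1, hd1⟩
              = if h : (i : ℕ) ≤ (j : ℕ) - 1
                then c ⟨(j : ℕ) - 1 - (i : ℕ), by omega⟩ else 0 := hA _ _ _
          rw [hAm, dif_neg (by omega)]
        · rfl
        · rfl
    refine ⟨c, ?_⟩
    rw [hXb, hW0, hZ0]
    apply Matrix.ext
    rintro (i | i) (j | j)
    · rw [Phi_inl_inl]
      simp
    · rw [Phi_inl_inr, Matrix.fromBlocks_apply₁₂]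
      have hAi : A' i j = if h : (i : ℕ) ≤ (j : ℕ)
          then c ⟨(j : ℕ) - (i : ℕ), by have := j.isLt; omega⟩ else 0 := hA _ i.isLt _
      rw [hAi]
    · rw [Phi_inr_inl, Matrix.fromBlocks_apply₂₁, hBf]
    · rw [Phi_inr_inr]
      simp
  have hrange : LinearMap.range (Phi F p q) = S := le_antisymm hr1 hr2
  rw [← hrange, LinearMap.finrank_range_of_inj hinj, Module.finrank_fin_fun]

end GLC

open Matrix in
/-- the centralizer of e in the (−1)-eigenspace of conjugation by
I_{p,q} on 𝔤𝔩_{p+q}(F) has dimension q. -/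
theorem gl_centralizer_dimension
    (F : Type*) [Field F] [CharZero F] (p q : ℕ) (hq : 0 < q) (hpq : q ≤ p) :
    let n := Fin p ⊕ Fin q
    let Ipq : Matrix n n F := Matrix.fromBlocks 1 0 0 (-1)
    let A : Matrix (Fin p) (Fin q) F := fun i j => if (i : ℕ) = (j : ℕ) then 1 else 0
    let B : Matrix (Fin q) (Fin p) F := fun i j => if (j : ℕ) = (i : ℕ) + 1 then 1 else 0
    let e : Matrix n n F := Matrix.fromBlocks 0 A B 0
    -- conjugation by I_{p,q} as a linear endomorphism
    let θ : Module.End F (Matrix n n F) :=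
      (LinearMap.mulLeft F Ipq).comp (LinearMap.mulRight F Ipq)
    -- ad_e as a linear endomorphism
    let ade : Module.End F (Matrix n n F) :=
      LinearMap.mulLeft F e - LinearMap.mulRight F e
    Module.finrank F ↥(Module.End.eigenspace θ (-1) ⊓ LinearMap.ker ade) = q := by
  intro n Ipq A B e θ ade
  exact GLC.main F p q hq hpq
end

section
/- Let q ≥ 1, p = q + 1, n = p + q, F a field of characteristic zero, J_{p,q} = diag(J_p, −J_q) with J_r the r×r antidiagonal identity. Let 𝔤 = 𝔬(J_{p,q}) and 𝔤(−1) its −1 eigenspace under conjugation by I_{p,q} = diag(1_p, −1_q). Let e ∈ 𝔤(−1) be the block matrix with upper-right block (1_q over 0_{1,q}) and lower-left block (0_{q,1}|1_q). Then dim_F {X ∈ 𝔤(−1) : [e,X] = 0} = q. -/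
/-!
Write `u i = Pi.single (inl i) 1` and `v j = Pi.single (inr j) 1`. The matrix `e` acts by
`u (j+1) ↦ v j ↦ u j`, a single Jordan chain `u q ↦ v (q-1) ↦ u (q-1) ↦ ⋯ ↦ v 0 ↦ u 0`, so
`u q` is a cyclic vector and a matrix commuting with `e` is determined by its value on `u q`.
For `X ∈ 𝔤(-1)` the diagonal blocks vanish, so `X (u q)` lies in the span of the `v j`: the
dimension is at most `q`. Conversely `e ∈ 𝔬(J) ∩ 𝔤(-1)`, hence so are its odd powers, and
`e ^ (2j+1)` sends `u q` to `v (q-1-j)`, so `e, e³, …, e^(2q-1)` realise every value.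
-/

open Matrix

section General

variable {R n : Type*} [CommRing R] [Fintype n] [DecidableEq n]

theorem Matrix.eq_zero_of_commute_of_mulVec_eq_zero {X N : Matrix n n R} {v : n → R}
    (hcyc : ∀ i, ∃ k, N ^ k *ᵥ v = Pi.single i 1) (hXN : Commute X N) (hv : X *ᵥ v = 0) :
    X = 0 := by
  ext a i
  obtain ⟨k, hk⟩ := hcyc i
  have hXi : X *ᵥ Pi.single i 1 = 0 := by
    rw [← hk, mulVec_mulVec, (hXN.pow_right k).eq, ← mulVec_mulVec, hv, mulVec_zero]
  simpa [mulVec_single_one] using congrFun hXi a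

variable (J I E : Matrix n n R)

/-- `𝔬(J) ∩ 𝔤(-1) ∩ ker (ad E)`, with `𝔤(-1)` the `-1` eigenspace of conjugation by `I`. -/
def orthCentralizer : Submodule R (Matrix n n R) :=
  LinearMap.ker ((LinearMap.mulRight R J).comp
      (Matrix.transposeLinearEquiv n n R R).toLinearMap + LinearMap.mulLeft R J) ⊓
    Module.End.eigenspace ((LinearMap.mulLeft R I).comp (LinearMap.mulRight R I)) (-1) ⊓
    LinearMap.ker (LinearMap.mulLeft R E - LinearMap.mulRight R E)

variable {J I E}

theorem mem_orthCentralizer {X : Matrix n n R} :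
    X ∈ orthCentralizer J I E ↔ Xᵀ * J + J * X = 0 ∧ I * (X * I) = -X ∧ Commute E X := by
  simp [orthCentralizer, commute_iff_eq, sub_eq_zero, and_assoc]

theorem pow_odd_mem_orthCentralizer (hE : E ∈ orthCentralizer J I E) (hI : I * I = 1) (k : ℕ) :
    E ^ (2 * k + 1) ∈ orthCentralizer J I E := by
  obtain ⟨hJ, hIE, -⟩ := mem_orthCentralizer.1 hE
  have hodd : Odd (2 * k + 1) := odd_two_mul_add_one k
  have hJE : SemiconjBy J E (-Eᵀ) := by
    simp [SemiconjBy, eq_neg_of_add_eq_zero_right hJ]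
  have hIE' : SemiconjBy I E (-E) := by
    calc I * E = I * (E * I) * I := by rw [mul_assoc, mul_assoc, hI, mul_one]
      _ = -E * I := by rw [hIE]
  refine mem_orthCentralizer.2 ⟨?_, ?_, (Commute.refl E).pow_right _⟩
  · rw [(hJE.pow_right _).eq, hodd.neg_pow, transpose_pow, neg_mul, add_neg_cancel]
  · rw [← mul_assoc, (hIE'.pow_right _).eq, hodd.neg_pow, mul_assoc, hI, mul_one]

theorem toBlocks₁₁_eq_zero_of_conj_eq_neg [IsAddTorsionFree R] {m p : Type*} [Fintype m]
    [Fintype p] [DecidableEq m] [DecidableEq p] {X : Matrix (m ⊕ p) (m ⊕ p) R}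
    (hX : fromBlocks 1 0 0 (-1) * (X * fromBlocks 1 0 0 (-1)) = -X) : X.toBlocks₁₁ = 0 := by
  rw [← fromBlocks_toBlocks X] at hX
  simp only [fromBlocks_multiply, fromBlocks_neg] at hX
  have h₁₁ := congrArg toBlocks₁₁ hX
  simp only [toBlocks_fromBlocks₁₁, Matrix.mul_one, Matrix.mul_zero, Matrix.one_mul,
    Matrix.zero_mul, add_zero] at h₁₁
  ext i j
  exact self_eq_neg.1 (congrFun₂ h₁₁ i j)

end General

namespace OrthCentralizerQAddOne

variable (R : Type*) [CommRing R] (q : ℕ)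

def antidiag (r : ℕ) : Matrix (Fin r) (Fin r) R :=
  fun i j => if (i : ℕ) + (j : ℕ) + 1 = r then 1 else 0

def blockA : Matrix (Fin (q + 1)) (Fin q) R := fun i j => if (i : ℕ) = (j : ℕ) then 1 else 0

def blockB : Matrix (Fin q) (Fin (q + 1)) R := fun i j => if (j : ℕ) = (i : ℕ) + 1 then 1 else 0

def nilE : Matrix (Fin (q + 1) ⊕ Fin q) (Fin (q + 1) ⊕ Fin q) R :=
  fromBlocks 0 (blockA R q) (blockB R q) 0

def Jpq : Matrix (Fin (q + 1) ⊕ Fin q) (Fin (q + 1) ⊕ Fin q) R :=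
  fromBlocks (antidiag R (q + 1)) 0 0 (-antidiag R q)

def Ipq : Matrix (Fin (q + 1) ⊕ Fin q) (Fin (q + 1) ⊕ Fin q) R := fromBlocks 1 0 0 (-1)

/-- The `v`-coordinates of `X (u q)`, listed in reverse so that `e ^ (2j+1)` maps to
`Pi.single j 1`. -/
@[simps]
def lastColumnTail :
    Matrix (Fin (q + 1) ⊕ Fin q) (Fin (q + 1) ⊕ Fin q) R →ₗ[R] (Fin q → R) where
  toFun X j := X (Sum.inr j.rev) (Sum.inl (Fin.last q))
  map_add' _ _ := rfl
  map_smul' _ _ := rfl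

variable {R q}

theorem antidiag_transpose (r : ℕ) : (antidiag R r)ᵀ = antidiag R r := by
  ext i j
  simp [antidiag, add_comm (i : ℕ)]

theorem antidiag_mulVec_single {r : ℕ} (i : Fin r) :
    antidiag R r *ᵥ Pi.single i 1 = Pi.single i.rev 1 := by
  ext k
  simp [antidiag, Pi.single_apply, Fin.ext_iff]
  grind

theorem blockA_mulVec_single (j : Fin q) :
    blockA R q *ᵥ Pi.single j 1 = Pi.single j.castSucc 1 := by
  ext k
  simp [blockA, Pi.single_apply, Fin.ext_iff]

theorem blockB_mulVec_single_succ (j : Fin q) :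
    blockB R q *ᵥ Pi.single j.succ 1 = Pi.single j 1 := by
  ext k
  simp [blockB, Pi.single_apply, Fin.ext_iff, eq_comm]

theorem transpose_blockB_mulVec_single (j : Fin q) :
    (blockB R q)ᵀ *ᵥ Pi.single j 1 = Pi.single j.succ 1 := by
  ext k
  simp [blockB, Pi.single_apply, Fin.ext_iff]

theorem transpose_blockB_mul_antidiag :
    (blockB R q)ᵀ * antidiag R q = antidiag R (q + 1) * blockA R q := by
  refine ext_of_mulVec_single fun j => ?_
  rw [← mulVec_mulVec, ← mulVec_mulVec, antidiag_mulVec_single, transpose_blockB_mulVec_single,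
    blockA_mulVec_single, antidiag_mulVec_single, Fin.rev_castSucc]

theorem transpose_blockA_mul_antidiag :
    (blockA R q)ᵀ * antidiag R (q + 1) = antidiag R q * blockB R q := by
  simpa [transpose_mul, antidiag_transpose] using
    congrArg transpose (transpose_blockB_mul_antidiag (R := R) (q := q)).symm

theorem Ipq_mul_self : Ipq R q * Ipq R q = 1 := by
  simp [Ipq, fromBlocks_multiply]

theorem nilE_mem_orthCentralizer :
    nilE R q ∈ orthCentralizer (Jpq R q) (Ipq R q) (nilE R q) := by
  refine mem_orthCentralizer.2 ⟨?_, ?_, Commute.refl _⟩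
  · simp [nilE, Jpq, fromBlocks_transpose, fromBlocks_multiply, fromBlocks_add,
      transpose_blockA_mul_antidiag, transpose_blockB_mul_antidiag]
  · simp [nilE, Ipq, fromBlocks_multiply, fromBlocks_neg]

theorem nilE_mulVec_single_inl_succ (j : Fin q) :
    nilE R q *ᵥ Pi.single (Sum.inl j.succ) 1 = Pi.single (Sum.inr j) 1 := by
  ext (k | k)
  · simp [nilE]
  · simp [nilE, Pi.single_apply, blockB, Fin.ext_iff, eq_comm]

theorem nilE_mulVec_single_inr (j : Fin q) :
    nilE R q *ᵥ Pi.single (Sum.inr j) 1 = Pi.single (Sum.inl j.castSucc) 1 := by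
  ext (k | k)
  · simp [nilE, Pi.single_apply, blockA, Fin.ext_iff]
  · simp [nilE]

theorem nilE_pow_even_mulVec (i : Fin (q + 1)) :
    nilE R q ^ (2 * (i : ℕ)) *ᵥ Pi.single (Sum.inl (Fin.last q)) 1 =
      Pi.single (Sum.inl i.rev) 1 := by
  induction i using Fin.induction with
  | zero => rw [Fin.val_zero, mul_zero, pow_zero, one_mulVec, Fin.rev_zero]
  | succ i ih =>
    rw [show 2 * (i.succ : ℕ) = 2 * (i.castSucc : ℕ) + 1 + 1 by simp; ring, pow_succ', pow_succ',
      ← mulVec_mulVec, ← mulVec_mulVec, ih, Fin.rev_castSucc, nilE_mulVec_single_inl_succ,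
      nilE_mulVec_single_inr, Fin.rev_succ]

theorem nilE_pow_odd_mulVec (j : Fin q) :
    nilE R q ^ (2 * (j : ℕ) + 1) *ᵥ Pi.single (Sum.inl (Fin.last q)) 1 =
      Pi.single (Sum.inr j.rev) 1 := by
  rw [pow_succ', ← mulVec_mulVec, ← Fin.val_castSucc, nilE_pow_even_mulVec, Fin.rev_castSucc,
    nilE_mulVec_single_inl_succ]

theorem exists_nilE_pow_mulVec_single_last_eq_single (a : Fin (q + 1) ⊕ Fin q) :
    ∃ k, nilE R q ^ k *ᵥ Pi.single (Sum.inl (Fin.last q)) 1 = Pi.single a 1 := by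
  rcases a with i | j
  · exact ⟨2 * (i.rev : ℕ), by rw [nilE_pow_even_mulVec, Fin.rev_rev]⟩
  · exact ⟨2 * (j.rev : ℕ) + 1, by rw [nilE_pow_odd_mulVec, Fin.rev_rev]⟩

theorem lastColumnTail_nilE_pow_odd (j : Fin q) :
    lastColumnTail R q (nilE R q ^ (2 * (j : ℕ) + 1)) = Pi.single j 1 := by
  ext k
  have h := congrFun (nilE_pow_odd_mulVec (R := R) j) (Sum.inr k.rev)
  simpa [mulVec_single_one, Pi.single_apply, Fin.rev_inj] using h

theorem eq_zero_of_lastColumnTail_eq_zero [IsAddTorsionFree R]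
    {X : Matrix (Fin (q + 1) ⊕ Fin q) (Fin (q + 1) ⊕ Fin q) R}
    (hX : X ∈ orthCentralizer (Jpq R q) (Ipq R q) (nilE R q)) (h : lastColumnTail R q X = 0) :
    X = 0 := by
  obtain ⟨-, hI, hE⟩ := mem_orthCentralizer.1 hX
  refine eq_zero_of_commute_of_mulVec_eq_zero
    exists_nilE_pow_mulVec_single_last_eq_single hE.symm ?_
  ext (k | k)
  · rw [mulVec_single_one]
    exact congrFun₂ (toBlocks₁₁_eq_zero_of_conj_eq_neg hI) k (Fin.last q)
  · simpa [mulVec_single_one] using congrFun h k.rev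

theorem finrank_orthCentralizer_nilE [Nontrivial R] [IsAddTorsionFree R] :
    Module.finrank R (orthCentralizer (Jpq R q) (Ipq R q) (nilE R q)) = q := by
  set S := orthCentralizer (Jpq R q) (Ipq R q) (nilE R q)
  have hinj : Function.Injective ((lastColumnTail R q).comp S.subtype) := by
    rw [← LinearMap.ker_eq_bot, LinearMap.ker_eq_bot']
    exact fun X hX => Subtype.ext (eq_zero_of_lastColumnTail_eq_zero X.2 hX)
  have hsurj : Function.Surjective ((lastColumnTail R q).comp S.subtype) := by
    intro c
    have hodd (j : Fin q) : nilE R q ^ (2 * (j : ℕ) + 1) ∈ S :=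
      pow_odd_mem_orthCentralizer nilE_mem_orthCentralizer Ipq_mul_self _
    refine ⟨⟨∑ j, c j • nilE R q ^ (2 * (j : ℕ) + 1),
      S.sum_mem fun j _ => S.smul_mem _ (hodd j)⟩, ?_⟩
    simp only [LinearMap.comp_apply, Submodule.subtype_apply, map_sum, map_smul,
      lastColumnTail_nilE_pow_odd]
    ext k
    simp [Pi.single_apply]
  rw [(LinearEquiv.ofBijective _ ⟨hinj, hsurj⟩).finrank_eq, Module.finrank_fin_fun]

end OrthCentralizerQAddOne

theorem orthogonal_centralizer_dimension_case_p_eq_q_add_one_general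
    (F : Type*) [Field F] [CharZero F] (p q : ℕ) (hpq : p = q + 1) :
    let n := Fin p ⊕ Fin q
    let Jp : Matrix (Fin p) (Fin p) F := fun i j => if (i : ℕ) + (j : ℕ) + 1 = p then 1 else 0
    let Jq : Matrix (Fin q) (Fin q) F := fun i j => if (i : ℕ) + (j : ℕ) + 1 = q then 1 else 0
    let Jpq : Matrix n n F := Matrix.fromBlocks Jp 0 0 (-Jq)
    let Ipq : Matrix n n F := Matrix.fromBlocks 1 0 0 (-1)
    let A : Matrix (Fin p) (Fin q) F := fun i j => if (i : ℕ) = (j : ℕ) then 1 else 0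
    let B : Matrix (Fin q) (Fin p) F := fun i j => if (j : ℕ) = (i : ℕ) + 1 then 1 else 0
    let e : Matrix n n F := Matrix.fromBlocks 0 A B 0
    -- X ↦ Xᵀ J_{p,q} + J_{p,q} X ; its kernel is 𝔬(J_{p,q})
    let orth : Matrix n n F →ₗ[F] Matrix n n F :=
      (LinearMap.mulRight F Jpq).comp
        (Matrix.transposeLinearEquiv n n F F).toLinearMap + LinearMap.mulLeft F Jpq
    -- conjugation by I_{p,q}
    let θ : Module.End F (Matrix n n F) :=
      (LinearMap.mulLeft F Ipq).comp (LinearMap.mulRight F Ipq)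
    -- ad_e
    let ade : Module.End F (Matrix n n F) :=
      LinearMap.mulLeft F e - LinearMap.mulRight F e
    Module.finrank F
      ↥(LinearMap.ker orth ⊓ Module.End.eigenspace θ (-1) ⊓ LinearMap.ker ade) = q := by
  subst hpq
  exact OrthCentralizerQAddOne.finrank_orthCentralizer_nilE

/-- for p = q + 1, the centralizer of e in the (−1)-eigenspace of
conjugation by I_{p,q} on 𝔬(J_{p,q}) has dimension q. -/
theorem orthogonal_centralizer_dimension_case_p_eq_q_add_one
    (F : Type*) [Field F] [CharZero F] (p q : ℕ) (hq : 0 < q) (hpq : p = q + 1) :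
    let n := Fin p ⊕ Fin q
    let Jp : Matrix (Fin p) (Fin p) F := fun i j => if (i : ℕ) + (j : ℕ) + 1 = p then 1 else 0
    let Jq : Matrix (Fin q) (Fin q) F := fun i j => if (i : ℕ) + (j : ℕ) + 1 = q then 1 else 0
    let Jpq : Matrix n n F := Matrix.fromBlocks Jp 0 0 (-Jq)
    let Ipq : Matrix n n F := Matrix.fromBlocks 1 0 0 (-1)
    let A : Matrix (Fin p) (Fin q) F := fun i j => if (i : ℕ) = (j : ℕ) then 1 else 0
    let B : Matrix (Fin q) (Fin p) F := fun i j => if (j : ℕ) = (i : ℕ) + 1 then 1 else 0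
    let e : Matrix n n F := Matrix.fromBlocks 0 A B 0
    -- X ↦ Xᵀ J_{p,q} + J_{p,q} X ; its kernel is 𝔬(J_{p,q})
    let orth : Matrix n n F →ₗ[F] Matrix n n F :=
      (LinearMap.mulRight F Jpq).comp
        (Matrix.transposeLinearEquiv n n F F).toLinearMap + LinearMap.mulLeft F Jpq
    -- conjugation by I_{p,q}
    let θ : Module.End F (Matrix n n F) :=
      (LinearMap.mulLeft F Ipq).comp (LinearMap.mulRight F Ipq)
    -- ad_e
    let ade : Module.End F (Matrix n n F) :=
      LinearMap.mulLeft F e - LinearMap.mulRight F e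
    Module.finrank F
      ↥(LinearMap.ker orth ⊓ Module.End.eigenspace θ (-1) ⊓ LinearMap.ker ade) = q :=
  orthogonal_centralizer_dimension_case_p_eq_q_add_one_general F p q hpq
end

section
/- Let p = q be a positive even integer, n = 2q, F a field of characteristic zero, J'_{q,q} = diag(J'_q, J'_q) with J'_q the skew antidiagonal matrix with entries (−1)^{i−1} at positions (i, q+1−i). Let 𝔤 = 𝔰𝔭(J'_{q,q}) and 𝔤(−1) its −1 eigenspace under conjugation by I_{q,q}. Let e = [[0,ε_q],[ε_q,0]] with ε_q the superdiagonal shift. Then dim_F {X ∈ 𝔤(−1) : [e,X] = 0} = q/2. -/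
open Matrix

section Helpers

variable {F : Type*} [Field F] {q : ℕ}

lemma hsum_ite_left (c : ℕ) (f : Fin q → F) :
    ∑ k : Fin q, (if (k : ℕ) = c then (1:F) else 0) * f k
      = if h : c < q then f ⟨c, h⟩ else 0 := by
  by_cases h : c < q
  · rw [dif_pos h, Finset.sum_eq_single (⟨c, h⟩ : Fin q)]
    · simp
    · intro k _ hk
      rw [if_neg (fun hkc => hk (Fin.ext hkc)), zero_mul]
    · simp
  · rw [dif_neg h]
    apply Finset.sum_eq_zero
    intro k _
    rw [if_neg (fun hkc => h (by omega)), zero_mul]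

lemma hsum_ite_right (c : ℕ) (f : Fin q → F) :
    ∑ k : Fin q, f k * (if (k : ℕ) = c then (1:F) else 0)
      = if h : c < q then f ⟨c, h⟩ else 0 := by
  by_cases h : c < q
  · rw [dif_pos h, Finset.sum_eq_single (⟨c, h⟩ : Fin q)]
    · simp
    · intro k _ hk
      rw [if_neg (fun hkc => hk (Fin.ext hkc)), mul_zero]
    · simp
  · rw [dif_neg h]
    apply Finset.sum_eq_zero
    intro k _
    rw [if_neg (fun hkc => h (by omega)), mul_zero]

lemma hsum_eps_right (j : Fin q) (f : Fin q → F) :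
    ∑ k : Fin q, f k * (if (j : ℕ) = (k : ℕ) + 1 then (1:F) else 0)
      = if h : 0 < (j : ℕ) then f ⟨(j : ℕ) - 1, by omega⟩ else 0 := by
  have hc : ∀ k : Fin q, (f k * if (j : ℕ) = (k : ℕ) + 1 then (1:F) else 0)
      = f k * (if (k : ℕ) = (j : ℕ) - 1 ∧ 0 < (j:ℕ) then (1:F) else 0) := by
    intro k
    congr 1
    exact if_congr (by omega) rfl rfl
  rw [Finset.sum_congr rfl (fun k _ => hc k)]
  by_cases hj : 0 < (j : ℕ)
  · rw [dif_pos hj]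
    have h2 := hsum_ite_right ((j:ℕ) - 1) f
    rw [dif_pos (by omega : (j:ℕ) - 1 < q)] at h2
    rw [← h2]
    exact Finset.sum_congr rfl (fun k _ => by
      rw [if_congr (by omega : ((k:ℕ) = (j:ℕ)-1 ∧ 0 < (j:ℕ)) ↔ (k:ℕ) = (j:ℕ)-1) rfl rfl])
  · rw [dif_neg hj]
    simp only [hj, and_false, if_false, mul_zero, Finset.sum_const_zero]

lemma hsum_J_left (i : Fin q) (f : Fin q → F) :
    ∑ k : Fin q, (if (i : ℕ) + (k : ℕ) + 1 = q then (-1:F) ^ (i : ℕ) else 0) * f k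
      = (-1:F) ^ (i : ℕ) * f ⟨q - 1 - (i : ℕ), by omega⟩ := by
  rw [Finset.sum_eq_single (⟨q - 1 - (i : ℕ), by omega⟩ : Fin q)]
  · rw [if_pos (by simp; omega)]
  · intro k _ hk
    rw [if_neg (fun hc => hk (Fin.ext (show (k:ℕ) = q - 1 - (i:ℕ) by omega))), zero_mul]
  · simp

lemma hsum_J_right (j : Fin q) (f : Fin q → F) :
    ∑ k : Fin q, f k * (if (k : ℕ) + (j : ℕ) + 1 = q then (-1:F) ^ (k : ℕ) else 0)
      = f ⟨q - 1 - (j : ℕ), by omega⟩ * (-1:F) ^ (q - 1 - (j : ℕ)) := by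
  rw [Finset.sum_eq_single (⟨q - 1 - (j : ℕ), by omega⟩ : Fin q)]
  · rw [if_pos (by simp; omega)]
  · intro k _ hk
    rw [if_neg (fun hc => hk (Fin.ext (show (k:ℕ) = q - 1 - (j:ℕ) by omega))), mul_zero]
  · simp

lemma hsum_one_right (j : Fin q) (f : Fin q → F) :
    ∑ k : Fin q, f k * (1 : Matrix (Fin q) (Fin q) F) k j = f j := by
  simp [Matrix.one_apply, mul_ite]

lemma hsum_one_left (i : Fin q) (f : Fin q → F) :
    ∑ k : Fin q, (1 : Matrix (Fin q) (Fin q) F) i k * f k = f i := by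
  simp [Matrix.one_apply, ite_mul]

lemma hsum_negone_right (j : Fin q) (f : Fin q → F) :
    ∑ k : Fin q, f k * (-1 : Matrix (Fin q) (Fin q) F) k j = - f j := by
  simp [Matrix.one_apply, mul_ite]

lemma hsum_negone_left (i : Fin q) (f : Fin q → F) :
    ∑ k : Fin q, (-1 : Matrix (Fin q) (Fin q) F) i k * f k = - f i := by
  simp [Matrix.one_apply, ite_mul]

end Helpers

/-- the matrix J'_q -/
def auxJq (F : Type*) [Field F] (q : ℕ) : Matrix (Fin q) (Fin q) F :=
  fun i j => if (i : ℕ) + (j : ℕ) + 1 = q then (-1 : F) ^ (i : ℕ) else 0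

/-- the superdiagonal shift ε_q -/
def auxEps (F : Type*) [Field F] (q : ℕ) : Matrix (Fin q) (Fin q) F :=
  fun i j => if (j : ℕ) = (i : ℕ) + 1 then 1 else 0

/-- k-th power of the shift, directly -/
def auxEk (F : Type*) [Field F] (q k : ℕ) : Matrix (Fin q) (Fin q) F :=
  fun i j => if (j : ℕ) = (i : ℕ) + k then 1 else 0

def auxJb (F : Type*) [Field F] (q : ℕ) : Matrix (Fin q ⊕ Fin q) (Fin q ⊕ Fin q) F :=
  Matrix.fromBlocks (auxJq F q) 0 0 (auxJq F q)

def auxIb (F : Type*) [Field F] (q : ℕ) : Matrix (Fin q ⊕ Fin q) (Fin q ⊕ Fin q) F :=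
  Matrix.fromBlocks 1 0 0 (-1)

def auxEb (F : Type*) [Field F] (q : ℕ) : Matrix (Fin q ⊕ Fin q) (Fin q ⊕ Fin q) F :=
  Matrix.fromBlocks 0 (auxEps F q) (auxEps F q) 0

section EntryLemmas

variable {F : Type*} [Field F] {q : ℕ} (M : Matrix (Fin q ⊕ Fin q) (Fin q ⊕ Fin q) F)

lemma ebL_l (i : Fin q) (v : Fin q ⊕ Fin q) :
    (auxEb F q * M) (Sum.inl i) v
      = if h : (i:ℕ) + 1 < q then M (Sum.inr ⟨(i:ℕ)+1, h⟩) v else 0 := by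
  rw [Matrix.mul_apply, Fintype.sum_sum_type]
  simp only [auxEb, auxEps, Matrix.fromBlocks_apply₁₁, Matrix.fromBlocks_apply₁₂,
    Matrix.zero_apply, zero_mul, Finset.sum_const_zero, zero_add]
  exact hsum_ite_left _ _

lemma ebL_r (i : Fin q) (v : Fin q ⊕ Fin q) :
    (auxEb F q * M) (Sum.inr i) v
      = if h : (i:ℕ) + 1 < q then M (Sum.inl ⟨(i:ℕ)+1, h⟩) v else 0 := by
  rw [Matrix.mul_apply, Fintype.sum_sum_type]
  simp only [auxEb, auxEps, Matrix.fromBlocks_apply₂₁, Matrix.fromBlocks_apply₂₂,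
    Matrix.zero_apply, zero_mul, Finset.sum_const_zero, add_zero]
  exact hsum_ite_left _ _

lemma ebR_l (u : Fin q ⊕ Fin q) (j : Fin q) :
    (M * auxEb F q) u (Sum.inl j)
      = if h : 0 < (j:ℕ) then M u (Sum.inr ⟨(j:ℕ)-1, by omega⟩) else 0 := by
  rw [Matrix.mul_apply, Fintype.sum_sum_type]
  simp only [auxEb, auxEps, Matrix.fromBlocks_apply₁₁, Matrix.fromBlocks_apply₂₁,
    Matrix.zero_apply, mul_zero, Finset.sum_const_zero, zero_add]
  exact hsum_eps_right _ _

lemma ebR_r (u : Fin q ⊕ Fin q) (j : Fin q) :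
    (M * auxEb F q) u (Sum.inr j)
      = if h : 0 < (j:ℕ) then M u (Sum.inl ⟨(j:ℕ)-1, by omega⟩) else 0 := by
  rw [Matrix.mul_apply, Fintype.sum_sum_type]
  simp only [auxEb, auxEps, Matrix.fromBlocks_apply₁₂, Matrix.fromBlocks_apply₂₂,
    Matrix.zero_apply, mul_zero, Finset.sum_const_zero, add_zero]
  exact hsum_eps_right _ _

lemma jbL_l (i : Fin q) (v : Fin q ⊕ Fin q) :
    (auxJb F q * M) (Sum.inl i) v
      = (-1:F) ^ (i:ℕ) * M (Sum.inl ⟨q - 1 - (i:ℕ), by omega⟩) v := by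
  rw [Matrix.mul_apply, Fintype.sum_sum_type]
  simp only [auxJb, auxJq, Matrix.fromBlocks_apply₁₁, Matrix.fromBlocks_apply₁₂,
    Matrix.zero_apply, zero_mul, Finset.sum_const_zero, add_zero]
  exact hsum_J_left _ _

lemma jbL_r (i : Fin q) (v : Fin q ⊕ Fin q) :
    (auxJb F q * M) (Sum.inr i) v
      = (-1:F) ^ (i:ℕ) * M (Sum.inr ⟨q - 1 - (i:ℕ), by omega⟩) v := by
  rw [Matrix.mul_apply, Fintype.sum_sum_type]
  simp only [auxJb, auxJq, Matrix.fromBlocks_apply₂₁, Matrix.fromBlocks_apply₂₂,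
    Matrix.zero_apply, zero_mul, Finset.sum_const_zero, zero_add]
  exact hsum_J_left _ _

lemma jbR_l (u : Fin q ⊕ Fin q) (j : Fin q) :
    (M * auxJb F q) u (Sum.inl j)
      = M u (Sum.inl ⟨q - 1 - (j:ℕ), by omega⟩) * (-1:F) ^ (q - 1 - (j:ℕ)) := by
  rw [Matrix.mul_apply, Fintype.sum_sum_type]
  simp only [auxJb, auxJq, Matrix.fromBlocks_apply₁₁, Matrix.fromBlocks_apply₂₁,
    Matrix.zero_apply, mul_zero, Finset.sum_const_zero, add_zero]
  exact hsum_J_right _ _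

lemma jbR_r (u : Fin q ⊕ Fin q) (j : Fin q) :
    (M * auxJb F q) u (Sum.inr j)
      = M u (Sum.inr ⟨q - 1 - (j:ℕ), by omega⟩) * (-1:F) ^ (q - 1 - (j:ℕ)) := by
  rw [Matrix.mul_apply, Fintype.sum_sum_type]
  simp only [auxJb, auxJq, Matrix.fromBlocks_apply₁₂, Matrix.fromBlocks_apply₂₂,
    Matrix.zero_apply, mul_zero, Finset.sum_const_zero, zero_add]
  exact hsum_J_right _ _

lemma ibL_l (i : Fin q) (v : Fin q ⊕ Fin q) :
    (auxIb F q * M) (Sum.inl i) v = M (Sum.inl i) v := by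
  rw [Matrix.mul_apply, Fintype.sum_sum_type]
  simp only [auxIb, Matrix.fromBlocks_apply₁₁, Matrix.fromBlocks_apply₁₂,
    Matrix.zero_apply, zero_mul, Finset.sum_const_zero, add_zero]
  exact hsum_one_left _ _

lemma ibL_r (i : Fin q) (v : Fin q ⊕ Fin q) :
    (auxIb F q * M) (Sum.inr i) v = - M (Sum.inr i) v := by
  rw [Matrix.mul_apply, Fintype.sum_sum_type]
  simp only [auxIb, Matrix.fromBlocks_apply₂₁, Matrix.fromBlocks_apply₂₂,
    Matrix.zero_apply, zero_mul, Finset.sum_const_zero, zero_add]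
  exact hsum_negone_left _ _

lemma ibR_l (u : Fin q ⊕ Fin q) (j : Fin q) :
    (M * auxIb F q) u (Sum.inl j) = M u (Sum.inl j) := by
  rw [Matrix.mul_apply, Fintype.sum_sum_type]
  simp only [auxIb, Matrix.fromBlocks_apply₁₁, Matrix.fromBlocks_apply₂₁,
    Matrix.zero_apply, mul_zero, Finset.sum_const_zero, add_zero]
  exact hsum_one_right _ _

lemma ibR_r (u : Fin q ⊕ Fin q) (j : Fin q) :
    (M * auxIb F q) u (Sum.inr j) = - M u (Sum.inr j) := by
  rw [Matrix.mul_apply, Fintype.sum_sum_type]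
  simp only [auxIb, Matrix.fromBlocks_apply₁₂, Matrix.fromBlocks_apply₂₂,
    Matrix.zero_apply, mul_zero, Finset.sum_const_zero, zero_add]
  exact hsum_negone_right _ _

end EntryLemmas

lemma key_struct {F : Type*} [Field F] [CharZero F] {q : ℕ} (hq0 : 0 < q) (hqe : Even q)
    (a b : ℕ → ℕ → F)
    (haz : ∀ i j, q ≤ i ∨ q ≤ j → a i j = 0)
    (hbz : ∀ i j, q ≤ i ∨ q ≤ j → b i j = 0)
    (h1 : ∀ i j, i + 1 < q → j + 1 < q → b (i+1) (j+1) = a i j)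
    (h2 : ∀ i j, i + 1 < q → j + 1 < q → a (i+1) (j+1) = b i j)
    (h1z : ∀ i, i + 1 < q → b (i+1) 0 = 0)
    (h2z : ∀ i, i + 1 < q → a (i+1) 0 = 0)
    (hS : ∀ u v, u < q → v < q →
      b u v = (-1 : F) ^ (u + v + 1) * a (q - 1 - v) (q - 1 - u)) :
    ∀ i j, i < q → j < q →
      (a i j = if i < j ∧ Odd (j - i) then a 0 (j - i) else 0) ∧ b i j = a i j := by
  have hq2 : q % 2 = 0 := Nat.even_iff.mp hqe
  -- below-diagonal zero
  have Z : ∀ j i, j < i → a i j = 0 ∧ b i j = 0 := by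
    intro j
    induction j with
    | zero =>
      intro i hi
      by_cases hiq : i < q
      · obtain ⟨i', rfl⟩ : ∃ i', i = i' + 1 := ⟨i - 1, by omega⟩
        exact ⟨h2z i' hiq, h1z i' hiq⟩
      · exact ⟨haz _ _ (Or.inl (by omega)), hbz _ _ (Or.inl (by omega))⟩
    | succ j ih =>
      intro i hi
      by_cases hiq : i < q
      · by_cases hjq : j + 1 < q
        · obtain ⟨i', rfl⟩ : ∃ i', i = i' + 1 := ⟨i - 1, by omega⟩
          rw [h2 i' j hiq hjq, h1 i' j hiq hjq]
          exact ⟨(ih i' (by omega)).2, (ih i' (by omega)).1⟩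
        · exact ⟨haz _ _ (Or.inr (by omega)), hbz _ _ (Or.inr (by omega))⟩
      · exact ⟨haz _ _ (Or.inl (by omega)), hbz _ _ (Or.inl (by omega))⟩
  -- constancy along diagonals
  have D : ∀ i k, i + k < q →
      (a i (i+k) = if Even i then a 0 k else b 0 k) ∧
      (b i (i+k) = if Even i then b 0 k else a 0 k) := by
    intro i
    induction i with
    | zero => intro k _; simp
    | succ i ih =>
      intro k hk
      have hik : i + k + 1 < q := by omega
      have e1 : i + 1 + k = (i + k) + 1 := by omega
      rw [e1, h2 i (i+k) (by omega) hik, h1 i (i+k) (by omega) hik]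
      obtain ⟨hA, hB⟩ := ih k (by omega)
      constructor
      · rw [hB]; by_cases hev : Even i <;> simp [hev, Nat.even_add_one]
      · rw [hA]; by_cases hev : Even i <;> simp [hev, Nat.even_add_one]
  -- b 0 v for even v
  have B0e : ∀ v, v < q → ¬ Odd v → b 0 v = 0 := by
    intro v hv hov
    have hv2 : v % 2 = 0 := by rw [← Nat.even_iff, ← Nat.not_odd_iff_even]; exact hov
    have hs := hS 0 v (by omega) hv
    have hd := (D (q - 1 - v) v (by omega)).1
    rw [if_neg (by rw [Nat.even_iff]; omega)] at hd
    have hse : q - 1 - v + v = q - 1 := by omega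
    rw [hse] at hd
    have hq10 : q - 1 - 0 = q - 1 := by omega
    rw [hq10, hd] at hs
    have hsgn : (-1 : F) ^ (0 + v + 1) = -1 := by
      rw [Odd.neg_one_pow]; rw [Nat.odd_iff]; omega
    rw [hsgn, neg_one_mul] at hs
    have : (2 : F) * b 0 v = 0 := by linear_combination hs
    rcases mul_eq_zero.mp this with h | h
    · exact absurd h two_ne_zero
    · exact h
  -- b 0 v for odd v
  have B0o : ∀ v, v < q → Odd v → b 0 v = a 0 v := by
    intro v hv hov
    have hv2 : v % 2 = 1 := Nat.odd_iff.mp hov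
    have hs := hS 0 v (by omega) hv
    have hd := (D (q - 1 - v) v (by omega)).1
    rw [if_pos (by rw [Nat.even_iff]; omega)] at hd
    have hse : q - 1 - v + v = q - 1 := by omega
    rw [hse] at hd
    have hq10 : q - 1 - 0 = q - 1 := by omega
    rw [hq10, hd] at hs
    have hsgn : (-1 : F) ^ (0 + v + 1) = 1 := by
      rw [Even.neg_one_pow]; rw [Nat.even_iff]; omega
    rw [hsgn, one_mul] at hs
    exact hs
  -- a 0 k = 0 for even k
  have A0e : ∀ k, k < q → ¬ Odd k → a 0 k = 0 := by
    intro k hk hok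
    have hk2 : k % 2 = 0 := by rw [← Nat.even_iff, ← Nat.not_odd_iff_even]; exact hok
    have hkq : k + 1 < q := by omega
    have hs := hS 1 (k + 1) (by omega) (by omega)
    have hd1 := (D 1 k (by omega)).2
    rw [if_neg (by simp)] at hd1
    have hd2 := (D (q - 1 - (k+1)) k (by omega)).1
    rw [if_pos (by rw [Nat.even_iff]; omega)] at hd2
    have hse : q - 1 - (k+1) + k = q - 1 - 1 := by omega
    rw [hse] at hd2
    have e2 : q - 1 - (k + 1) = q - 1 - (k+1) := rfl
    rw [show (1:ℕ) + k = k + 1 from by omega] at hd1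
    rw [hd1, hd2] at hs
    have hsgn : (-1 : F) ^ (1 + (k + 1) + 1) = -1 := by
      rw [Odd.neg_one_pow]; rw [Nat.odd_iff]; omega
    rw [hsgn, neg_one_mul] at hs
    have : (2 : F) * a 0 k = 0 := by linear_combination hs
    rcases mul_eq_zero.mp this with h | h
    · exact absurd h two_ne_zero
    · exact h
  -- final
  intro i j hi hj
  have ha : a i j = if i < j ∧ Odd (j - i) then a 0 (j - i) else 0 := by
    by_cases hij : i < j
    · have hd := (D i (j - i) (by omega)).1
      rw [show i + (j - i) = j from by omega] at hd
      by_cases ho : Odd (j - i)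
      · rw [if_pos ⟨hij, ho⟩, hd]
        by_cases hev : Even i
        · rw [if_pos hev]
        · rw [if_neg hev, B0o _ (by omega) ho]
      · rw [if_neg (by tauto), hd]
        by_cases hev : Even i
        · rw [if_pos hev]; exact A0e _ (by omega) ho
        · rw [if_neg hev]; exact B0e _ (by omega) ho
    · rw [if_neg (by tauto)]
      by_cases hij2 : j < i
      · exact (Z j i hij2).1
      · have : i = j := by omega
        subst this
        have hd := (D i 0 (by omega)).1
        rw [Nat.add_zero] at hd
        rw [hd]
        by_cases hev : Even i
        · rw [if_pos hev]; exact A0e 0 (by omega) (by simp)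
        · rw [if_neg hev]; exact B0e 0 (by omega) (by simp)
  refine ⟨ha, ?_⟩
  by_cases hij : i ≤ j
  · have hd := (D i (j - i) (by omega)).2
    rw [show i + (j - i) = j from by omega] at hd
    rw [hd, ha]
    by_cases ho : Odd (j - i)
    · have hij' : i < j := by rcases ho with ⟨t, ht⟩; omega
      have hc : i < j ∧ Odd (j - i) := ⟨hij', ho⟩
      rw [if_pos hc]
      by_cases hev : Even i
      · rw [if_pos hev]; exact B0o _ (by omega) ho
      · rw [if_neg hev]
    · have hnc : ¬ (i < j ∧ Odd (j - i)) := fun h => ho h.2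
      by_cases hev : Even i
      · rw [if_pos hev, if_neg hnc]; exact B0e _ (by omega) ho
      · rw [if_neg hev, if_neg hnc]; exact A0e _ (by omega) ho
  · rw [(Z j i (by omega)).2, (Z j i (by omega)).1]

theorem aux_main
    (F : Type*) [Field F] [CharZero F] (q : ℕ) (hq : 0 < q) (hqe : Even q) :
    Module.finrank F
      ↥(LinearMap.ker
          ((LinearMap.mulRight F (auxJb F q)).comp
            (Matrix.transposeLinearEquiv (Fin q ⊕ Fin q) (Fin q ⊕ Fin q) F F).toLinearMap
           + LinearMap.mulLeft F (auxJb F q))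
        ⊓ Module.End.eigenspace
            ((LinearMap.mulLeft F (auxIb F q)).comp (LinearMap.mulRight F (auxIb F q))) (-1)
        ⊓ LinearMap.ker (LinearMap.mulLeft F (auxEb F q) - LinearMap.mulRight F (auxEb F q)))
      = q / 2 := by
  classical
  have hq2 : q % 2 = 0 := Nat.even_iff.mp hqe
  set Y : Fin (q/2) → Matrix (Fin q ⊕ Fin q) (Fin q ⊕ Fin q) F :=
    fun m => Matrix.fromBlocks 0 (auxEk F q (2*(m:ℕ)+1)) (auxEk F q (2*(m:ℕ)+1)) 0 with hY
  set φ : (Fin (q/2) → F) →ₗ[F] Matrix (Fin q ⊕ Fin q) (Fin q ⊕ Fin q) F :=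
    { toFun := fun c => ∑ m, c m • Y m
      map_add' := fun c d => by simp [add_smul, Finset.sum_add_distrib]
      map_smul' := fun r c => by simp [smul_smul, Finset.smul_sum] } with hφ
  have hφa : ∀ (c : Fin (q/2) → F) (u v : Fin q ⊕ Fin q),
      φ c u v = ∑ m, c m * Y m u v := by
    intro c u v
    rw [hφ]
    simp [Matrix.sum_apply]
  have hinj : Function.Injective φ := by
    rw [← LinearMap.ker_eq_bot]
    apply (Submodule.eq_bot_iff _).mpr
    intro c hc
    funext m
    have h2m : 2*(m:ℕ)+1 < q := by
      have := m.isLt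
      omega
    have hx : φ c (Sum.inl ⟨0, hq⟩) (Sum.inr ⟨2*(m:ℕ)+1, h2m⟩) = 0 := by
      rw [LinearMap.mem_ker.mp hc]
      rfl
    have hx' : (∑ m', c m' * Y m' (Sum.inl ⟨0, hq⟩) (Sum.inr ⟨2*(m:ℕ)+1, h2m⟩)) = 0 :=
      (hφa c _ _).symm.trans hx
    simp only [hY, Matrix.fromBlocks_apply₁₂, auxEk, Matrix.zero_apply] at hx'
    rw [Finset.sum_eq_single m] at hx'
    · simpa using hx'
    · intro m' _ hm'
      rw [if_neg (by simp; omega), mul_zero]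
    · simp
  have hrange : LinearMap.range φ
      = LinearMap.ker
          ((LinearMap.mulRight F (auxJb F q)).comp
            (Matrix.transposeLinearEquiv (Fin q ⊕ Fin q) (Fin q ⊕ Fin q) F F).toLinearMap
           + LinearMap.mulLeft F (auxJb F q))
        ⊓ Module.End.eigenspace
            ((LinearMap.mulLeft F (auxIb F q)).comp (LinearMap.mulRight F (auxIb F q))) (-1)
        ⊓ LinearMap.ker (LinearMap.mulLeft F (auxEb F q) - LinearMap.mulRight F (auxEb F q)) := by
    apply le_antisymm
    · rintro Z ⟨c, rfl⟩
      have hZ : φ c = ∑ m, c m • Y m := rfl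
      rw [hZ]
      refine Submodule.sum_mem _ (fun m _ => Submodule.smul_mem _ _ ?_)
      have hκ : Odd (2*(m:ℕ)+1) := ⟨(m:ℕ), by omega⟩
      refine Submodule.mem_inf.mpr ⟨Submodule.mem_inf.mpr ⟨?_, ?_⟩, ?_⟩
      · -- symplectic condition
        rw [LinearMap.mem_ker]
        show (Y m)ᵀ * auxJb F q + auxJb F q * Y m = 0
        ext u v
        rw [Matrix.add_apply, Matrix.zero_apply]
        rcases u with i | i <;> rcases v with j | j
        · rw [jbR_l, jbL_l, Matrix.transpose_apply]
          simp [hY]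
        · rw [jbR_r, jbL_l, Matrix.transpose_apply]
          simp only [hY, Matrix.fromBlocks_apply₂₁, Matrix.fromBlocks_apply₁₂, auxEk]
          by_cases hc1 : (i:ℕ) = (q - 1 - (j:ℕ)) + (2*(m:ℕ)+1)
          · have hc2 : (j:ℕ) = (q - 1 - (i:ℕ)) + (2*(m:ℕ)+1) := by omega
            rw [if_pos (by omega), if_pos (by omega)]
            have hi : (i:ℕ) = (q - 1 - (j:ℕ)) + (2*(m:ℕ)+1) := hc1
            rw [hi, pow_add, Odd.neg_one_pow hκ]
            ring
          · rw [if_neg (by omega), if_neg (by omega)]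
            ring
        · rw [jbR_l, jbL_r, Matrix.transpose_apply]
          simp only [hY, Matrix.fromBlocks_apply₁₂, Matrix.fromBlocks_apply₂₁, auxEk]
          by_cases hc1 : (i:ℕ) = (q - 1 - (j:ℕ)) + (2*(m:ℕ)+1)
          · rw [if_pos (by omega), if_pos (by omega)]
            have hi : (i:ℕ) = (q - 1 - (j:ℕ)) + (2*(m:ℕ)+1) := hc1
            rw [hi, pow_add, Odd.neg_one_pow hκ]
            ring
          · rw [if_neg (by omega), if_neg (by omega)]
            ring
        · rw [jbR_r, jbL_r, Matrix.transpose_apply]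
          simp [hY]
      · -- eigenspace condition
        rw [Module.End.mem_eigenspace_iff]
        show auxIb F q * (Y m * auxIb F q) = (-1:F) • Y m
        ext u v
        rw [Matrix.smul_apply, smul_eq_mul]
        rcases u with i | i <;> rcases v with j | j
        · rw [ibL_l, ibR_l]
          simp [hY]
        · rw [ibL_l, ibR_r]
          ring
        · rw [ibL_r, ibR_l]
          ring
        · rw [ibL_r, ibR_r]
          simp [hY]
      · -- centralizer condition
        rw [LinearMap.mem_ker]
        show auxEb F q * Y m - Y m * auxEb F q = 0
        rw [sub_eq_zero]
        ext u v
        rcases u with i | i <;> rcases v with j | j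
        · rw [ebL_l, ebR_l]
          simp only [hY, Matrix.fromBlocks_apply₂₁, Matrix.fromBlocks_apply₁₂, auxEk]
          split_ifs <;> first | rfl | (exfalso; omega)
        · rw [ebL_l, ebR_r]
          simp only [hY, Matrix.fromBlocks_apply₂₂, Matrix.fromBlocks_apply₁₁, Matrix.zero_apply]
          split_ifs <;> rfl
        · rw [ebL_r, ebR_l]
          simp only [hY, Matrix.fromBlocks_apply₁₁, Matrix.fromBlocks_apply₂₂, Matrix.zero_apply]
          split_ifs <;> rfl
        · rw [ebL_r, ebR_r]
          simp only [hY, Matrix.fromBlocks_apply₁₂, Matrix.fromBlocks_apply₂₁, auxEk]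
          split_ifs <;> first | rfl | (exfalso; omega)
    · intro X hX
      obtain ⟨h12m, h3m⟩ := Submodule.mem_inf.mp hX
      obtain ⟨h1m, h2m⟩ := Submodule.mem_inf.mp h12m
      have hsymp : Xᵀ * auxJb F q + auxJb F q * X = 0 := LinearMap.mem_ker.mp h1m
      have hθ : auxIb F q * (X * auxIb F q) = (-1:F) • X := Module.End.mem_eigenspace_iff.mp h2m
      have hade : auxEb F q * X = X * auxEb F q := sub_eq_zero.mp (LinearMap.mem_ker.mp h3m)
      set a : ℕ → ℕ → F := fun i j =>
        if h : i < q ∧ j < q then X (Sum.inl ⟨i, h.1⟩) (Sum.inr ⟨j, h.2⟩) else 0 with hadef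
      set b : ℕ → ℕ → F := fun i j =>
        if h : i < q ∧ j < q then X (Sum.inr ⟨i, h.1⟩) (Sum.inl ⟨j, h.2⟩) else 0 with hbdef
      have hpll : ∀ i j : Fin q, X (Sum.inl i) (Sum.inl j) = 0 := by
        intro i j
        have h := congrFun (congrFun hθ (Sum.inl i)) (Sum.inl j)
        rw [ibL_l, ibR_l, Matrix.smul_apply, smul_eq_mul] at h
        have h2 : (2:F) * X (Sum.inl i) (Sum.inl j) = 0 := by linear_combination h
        exact (mul_eq_zero.mp h2).resolve_left two_ne_zero
      have hprr : ∀ i j : Fin q, X (Sum.inr i) (Sum.inr j) = 0 := by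
        intro i j
        have h := congrFun (congrFun hθ (Sum.inr i)) (Sum.inr j)
        rw [ibL_r, ibR_r, Matrix.smul_apply, smul_eq_mul] at h
        have h2 : (2:F) * X (Sum.inr i) (Sum.inr j) = 0 := by linear_combination h
        exact (mul_eq_zero.mp h2).resolve_left two_ne_zero
      have haz : ∀ i j, q ≤ i ∨ q ≤ j → a i j = 0 := by
        intro i j hij
        simp only [hadef]
        exact dif_neg (by omega)
      have hbz : ∀ i j, q ≤ i ∨ q ≤ j → b i j = 0 := by
        intro i j hij
        simp only [hbdef]
        exact dif_neg (by omega)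
      have hE1 : ∀ i j, i + 1 < q → j + 1 < q → b (i+1) (j+1) = a i j := by
        intro i j hi hj
        have h := congrFun (congrFun hade (Sum.inl (⟨i, by omega⟩ : Fin q)))
          (Sum.inl (⟨j+1, hj⟩ : Fin q))
        rw [ebL_l, ebR_l] at h
        split_ifs at h with hc1 hc2
        · simp only [hadef, hbdef]
          rw [dif_pos ⟨hi, hj⟩, dif_pos ⟨(by omega : i < q), (by omega : j < q)⟩]
          exact h
        · exact absurd (Nat.succ_pos j) hc2
        · exact absurd hi hc1
        · exact absurd hi hc1
      have hE2 : ∀ i j, i + 1 < q → j + 1 < q → a (i+1) (j+1) = b i j := by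
        intro i j hi hj
        have h := congrFun (congrFun hade (Sum.inr (⟨i, by omega⟩ : Fin q)))
          (Sum.inr (⟨j+1, hj⟩ : Fin q))
        rw [ebL_r, ebR_r] at h
        split_ifs at h with hc1 hc2
        · simp only [hadef, hbdef]
          rw [dif_pos ⟨hi, hj⟩, dif_pos ⟨(by omega : i < q), (by omega : j < q)⟩]
          exact h
        · exact absurd (Nat.succ_pos j) hc2
        · exact absurd hi hc1
        · exact absurd hi hc1
      have h1z : ∀ i, i + 1 < q → b (i+1) 0 = 0 := by
        intro i hi
        have h := congrFun (congrFun hade (Sum.inl (⟨i, by omega⟩ : Fin q)))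
          (Sum.inl (⟨0, hq⟩ : Fin q))
        rw [ebL_l, ebR_l] at h
        split_ifs at h with hc1 hc2
        · exact absurd hc2 (Nat.lt_irrefl 0)
        · simp only [hbdef]
          rw [dif_pos ⟨hi, hq⟩]
          exact h
        · exact absurd hi hc1
        · exact absurd hi hc1
      have h2z : ∀ i, i + 1 < q → a (i+1) 0 = 0 := by
        intro i hi
        have h := congrFun (congrFun hade (Sum.inr (⟨i, by omega⟩ : Fin q)))
          (Sum.inr (⟨0, hq⟩ : Fin q))
        rw [ebL_r, ebR_r] at h
        split_ifs at h with hc1 hc2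
        · exact absurd hc2 (Nat.lt_irrefl 0)
        · simp only [hadef]
          rw [dif_pos ⟨hi, hq⟩]
          exact h
        · exact absurd hi hc1
        · exact absurd hi hc1
      have hS : ∀ u v, u < q → v < q →
          b u v = (-1:F) ^ (u + v + 1) * a (q - 1 - v) (q - 1 - u) := by
        intro u v hu hv
        set j' : Fin q := ⟨q - 1 - u, by omega⟩ with hj'
        have h := congrFun (congrFun hsymp (Sum.inl (⟨v, hv⟩ : Fin q))) (Sum.inr j')
        rw [Matrix.add_apply, jbR_r, jbL_l, Matrix.transpose_apply, Matrix.zero_apply] at h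
        simp only [show (j' : ℕ) = q - 1 - u from rfl,
          show ((⟨v, hv⟩ : Fin q) : ℕ) = v from rfl,
          show q - 1 - (q - 1 - u) = u from by omega] at h
        have hbv : X (Sum.inr (⟨u, hu⟩ : Fin q)) (Sum.inl (⟨v, hv⟩ : Fin q)) = b u v := by
          simp only [hbdef]
          rw [dif_pos ⟨hu, hv⟩]
        have hav : X (Sum.inl (⟨q - 1 - v, by omega⟩ : Fin q)) (Sum.inr j') = a (q-1-v) (q-1-u) := by
          simp only [hadef]
          rw [dif_pos ⟨(by omega : q-1-v < q), (by omega : q-1-u < q)⟩]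
        rw [hbv, hav] at h
        have hsq : ((-1:F) ^ u) * ((-1:F) ^ u) = 1 := by
          rw [← pow_add]
          exact Even.neg_one_pow ⟨u, rfl⟩
        linear_combination ((-1:F) ^ u) * h - (b u v) * hsq
      have key := key_struct hq hqe a b haz hbz hE1 hE2 h1z h2z hS
      refine ⟨fun m => a 0 (2*(m:ℕ)+1), ?_⟩
      have hsum : ∀ (i j : Fin q),
          (∑ m : Fin (q/2), a 0 (2*(m:ℕ)+1) *
            (if (j:ℕ) = (i:ℕ) + (2*(m:ℕ)+1) then (1:F) else 0))
          = if (i:ℕ) < (j:ℕ) ∧ Odd ((j:ℕ) - (i:ℕ)) then a 0 ((j:ℕ) - (i:ℕ)) else 0 := by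
        intro i j
        by_cases hcond : (i:ℕ) < (j:ℕ) ∧ Odd ((j:ℕ) - (i:ℕ))
        · obtain ⟨hlt, t, ht⟩ := hcond
          rw [if_pos ⟨hlt, t, ht⟩]
          have htq : t < q/2 := by
            have := j.isLt
            omega
          rw [Finset.sum_eq_single (⟨t, htq⟩ : Fin (q/2))]
          · rw [if_pos (show (j:ℕ) = (i:ℕ) + (2*t+1) from by omega), mul_one]
            show a 0 (2*t+1) = a 0 ((j:ℕ) - (i:ℕ))
            congr 1
            omega
          · intro m' _ hm'
            rw [if_neg (fun hc => hm' (Fin.ext (show (m':ℕ) = t by omega))), mul_zero]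
          · simp
        · rw [if_neg hcond]
          apply Finset.sum_eq_zero
          intro m _
          rw [if_neg, mul_zero]
          intro hc
          exact hcond ⟨by omega, ⟨(m:ℕ), by omega⟩⟩
      funext u v
      rw [hφa]
      rcases u with i | i <;> rcases v with j | j
      · simp only [hY, Matrix.fromBlocks_apply₁₁, Matrix.zero_apply, mul_zero,
          Finset.sum_const_zero]
        exact (hpll i j).symm
      · simp only [hY, Matrix.fromBlocks_apply₁₂, auxEk]
        rw [hsum i j]
        have hxa : X (Sum.inl i) (Sum.inr j) = a (i:ℕ) (j:ℕ) := by
          simp only [hadef]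
          rw [dif_pos ⟨i.isLt, j.isLt⟩]
        rw [hxa]
        exact ((key (i:ℕ) (j:ℕ) i.isLt j.isLt).1).symm
      · simp only [hY, Matrix.fromBlocks_apply₂₁, auxEk]
        rw [hsum i j]
        have hxb : X (Sum.inr i) (Sum.inl j) = b (i:ℕ) (j:ℕ) := by
          simp only [hbdef]
          rw [dif_pos ⟨i.isLt, j.isLt⟩]
        rw [hxb, (key (i:ℕ) (j:ℕ) i.isLt j.isLt).2]
        exact ((key (i:ℕ) (j:ℕ) i.isLt j.isLt).1).symm
      · simp only [hY, Matrix.fromBlocks_apply₂₂, Matrix.zero_apply, mul_zero,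
          Finset.sum_const_zero]
        exact (hprr i j).symm
  rw [← hrange, ← LinearEquiv.finrank_eq (LinearEquiv.ofInjective φ hinj)]
  simp [Module.finrank_pi]

/-- for p = q a positive even integer, the centralizer of
e = [[0, ε_q], [ε_q, 0]] in the (−1)-eigenspace of conjugation by I_{q,q} on
𝔰𝔭(J'_{q,q}) has dimension q/2. -/
theorem symplectic_centralizer_dimension_case_p_eq_q
    (F : Type*) [Field F] [CharZero F] (q : ℕ) (hq : 0 < q) (hqe : Even q) :
    let n := Fin q ⊕ Fin q
    let Jq' : Matrix (Fin q) (Fin q) F :=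
      fun i j => if (i : ℕ) + (j : ℕ) + 1 = q then (-1 : F) ^ (i : ℕ) else 0
    let Jqq' : Matrix n n F := Matrix.fromBlocks Jq' 0 0 Jq'
    let Iqq : Matrix n n F := Matrix.fromBlocks 1 0 0 (-1)
    let ε : Matrix (Fin q) (Fin q) F := fun i j => if (j : ℕ) = (i : ℕ) + 1 then 1 else 0
    let e : Matrix n n F := Matrix.fromBlocks 0 ε ε 0
    -- X ↦ Xᵀ J'_{q,q} + J'_{q,q} X ; its kernel is 𝔰𝔭(J'_{q,q})
    let symp : Matrix n n F →ₗ[F] Matrix n n F :=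
      (LinearMap.mulRight F Jqq').comp
        (Matrix.transposeLinearEquiv n n F F).toLinearMap + LinearMap.mulLeft F Jqq'
    let θ : Module.End F (Matrix n n F) :=
      (LinearMap.mulLeft F Iqq).comp (LinearMap.mulRight F Iqq)
    let ade : Module.End F (Matrix n n F) :=
      LinearMap.mulLeft F e - LinearMap.mulRight F e
    Module.finrank F
      ↥(LinearMap.ker symp ⊓ Module.End.eigenspace θ (-1) ⊓ LinearMap.ker ade) = q / 2 := by
  intro n Jq' Jqq' Iqq ε e symp θ ade
  exact aux_main F q hq hqe
end

section
/- Let 𝔤 be a Lie algebra over a field F of characteristic zero, θ an involution of 𝔤 with eigenspaces 𝔤(±1), and suppose (e, f, h) is an sl₂-triple with e ∈ 𝔤(−1), h ∈ 𝔤(1). Then f is the unique element of 𝔤 satisfying [h, f] = −2f and [e, f] = h within the span of candidates lying in a finite-dimensional 𝔤; moreover if (e, f', h) is another sl₂-triple with the same e and h and f' − f centralizes e, then f' = f. -/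
/-- Kostant uniqueness: in a finite-dimensional Lie algebra over a
characteristic-zero field with an involution θ, if (e, f, h) and (e, f', h) are
sl₂-triples with e ∈ 𝔤(−1), h ∈ 𝔤(1), and f' − f centralizes e, then f' = f. -/
theorem sl2_triple_completion_unique
    (F : Type*) [Field F] [CharZero F]
    (L : Type*) [LieRing L] [LieAlgebra F L] [Module.Finite F L]
    (θ : L →ₗ⁅F⁆ L) (hθ : ∀ x, θ (θ x) = x)
    (e f f' h : L)
    (he0 : e ≠ 0) (hf0 : f ≠ 0) (hf'0 : f' ≠ 0) (hh0 : h ≠ 0)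
    (hee : θ e = -e) (hhh : θ h = h)
    (t1 : ⁅h, e⁆ = (2 : F) • e) (t2 : ⁅h, f⁆ = -((2 : F) • f)) (t3 : ⁅e, f⁆ = h)
    (t2' : ⁅h, f'⁆ = -((2 : F) • f')) (t3' : ⁅e, f'⁆ = h)
    (hcent : ⁅e, f' - f⁆ = 0) :
    f' = f := by
  by_contra hne
  have hd : f' - f ≠ 0 := sub_ne_zero.mpr hne
  have t : IsSl2Triple h e f := by
    refine ⟨hh0, t3, ?_, ?_⟩
    · rw [t1]; module
    · rw [t2]; module
  have hlh : ⁅h, f' - f⁆ = (-2 : F) • (f' - f) := by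
    rw [lie_sub, t2, t2']; module
  have P : t.HasPrimitiveVectorWith (f' - f) (-2 : F) := ⟨hd, hlh, hcent⟩
  obtain ⟨n, hn⟩ := P.exists_nat
  have h2 : ((n + 2 : ℕ) : F) = 0 := by push_cast; linear_combination -hn
  rw [Nat.cast_eq_zero] at h2
  omega
end

section
/- Let p ≥ q ≥ 1, n = p+q, F a field of characteristic zero, and let e ∈ 𝔤𝔩_n(F) be the block matrix with upper-right p×q block (1_q over 0_{p−q,q}) and lower-left q×p block (0_{q,1}|1_q|0_{q,p−q−1}). Then the centralizer of e in all of the −1 eigenspace V of conjugation by diag(1_p,−1_q) consists of polynomials in e restricted appropriately; in particular, every element of {X ∈ V : eX = Xe} commutes with every other element of this centralizer, i.e. the centralizer of e in V is an abelian subspace under the commutator bracket. -/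
open Matrix

section Aux
variable {F : Type*} [Field F] {p q : ℕ}

def IsStruct (q : ℕ) {p : ℕ} (X : Matrix (Fin p ⊕ Fin q) (Fin p ⊕ Fin q) F) (c : ℕ → F) : Prop :=
  (∀ a b, X (Sum.inl a) (Sum.inl b) = 0) ∧
  (∀ a b, X (Sum.inr a) (Sum.inr b) = 0) ∧
  (∀ a b, X (Sum.inl a) (Sum.inr b) = if (a:ℕ) ≤ (b:ℕ) then c ((b:ℕ) - a) else 0) ∧
  (∀ a b, X (Sum.inr a) (Sum.inl b) = if (a:ℕ) < (b:ℕ) ∧ (b:ℕ) ≤ q then c ((b:ℕ) - a - 1) else 0)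

lemma conv_symm (c c' : ℕ → F) (s : ℕ) (hs : 0 < s) :
    ∑ t ∈ Finset.range s, c t * c' (s - 1 - t)
      = ∑ t ∈ Finset.range s, c' t * c (s - 1 - t) := by
  rw [← Finset.sum_range_reflect]
  refine Finset.sum_congr rfl fun t ht => ?_
  simp only [Finset.mem_range] at ht
  rw [mul_comm]
  have h2 : s - 1 - (s - 1 - t) = t := by omega
  rw [h2]

lemma sum_fin_conv (m a b : ℕ) (c c' : ℕ → F) (hb : b ≤ m) :
    (∑ j : Fin m, if a ≤ (j:ℕ) ∧ (j:ℕ) < b then c ((j:ℕ) - a) * c' (b - 1 - j) else 0)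
      = if a < b then ∑ t ∈ Finset.range (b - a), c t * c' (b - a - 1 - t) else 0 := by
  rw [Fin.sum_univ_eq_sum_range (fun j => if a ≤ j ∧ j < b then c (j - a) * c' (b - 1 - j) else 0)]
  by_cases hab : a < b
  · rw [if_pos hab]
    have h1 : ∀ j ∈ Finset.range m,
        (if a ≤ j ∧ j < b then c (j - a) * c' (b - 1 - j) else 0)
          = if j ∈ Finset.Ico a b then c (j - a) * c' (b - 1 - j) else 0 := by
      intro j _; simp [Finset.mem_Ico]
    have hsub : Finset.Ico a b ⊆ Finset.range m := by
      intro j hj; simp only [Finset.mem_Ico] at hj; simp only [Finset.mem_range]; omega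
    rw [Finset.sum_congr rfl h1, Finset.sum_ite_mem, Finset.inter_eq_right.mpr hsub,
      Finset.sum_Ico_eq_sum_range]
    refine Finset.sum_congr rfl fun t ht => ?_
    simp only [Finset.mem_range] at ht
    have e1 : a + t - a = t := by omega
    have e2 : b - 1 - (a + t) = b - a - 1 - t := by omega
    rw [e1, e2]
  · rw [if_neg hab]
    exact Finset.sum_eq_zero fun j _ => by rw [if_neg (by omega)]

lemma commute_of_struct (hpq : q ≤ p) (X Y : Matrix (Fin p ⊕ Fin q) (Fin p ⊕ Fin q) F)
    {c c' : ℕ → F}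
    (hX : IsStruct q X c) (hY : IsStruct q Y c') : X * Y = Y * X := by
  obtain ⟨hX1, hX2, hX3, hX4⟩ := hX
  obtain ⟨hY1, hY2, hY3, hY4⟩ := hY
  ext ab cd
  rw [Matrix.mul_apply, Matrix.mul_apply, Fintype.sum_sum_type, Fintype.sum_sum_type]
  cases ab with
  | inl a =>
    cases cd with
    | inl b =>
      simp only [hX1, hY1, hX3, hY3, hX4, hY4, zero_mul, mul_zero, Finset.sum_const_zero,
        zero_add, add_zero]
      by_cases hbq : (b:ℕ) ≤ q
      · have key : ∀ (d d' : ℕ → F),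
            (∑ j : Fin q, (if (a:ℕ) ≤ (j:ℕ) then d ((j:ℕ) - a) else 0) *
              (if (j:ℕ) < (b:ℕ) ∧ (b:ℕ) ≤ q then d' ((b:ℕ) - j - 1) else 0))
            = if (a:ℕ) < (b:ℕ) then
                ∑ t ∈ Finset.range ((b:ℕ) - a), d t * d' ((b:ℕ) - a - 1 - t) else 0 := by
          intro d d'
          rw [← sum_fin_conv q (a:ℕ) (b:ℕ) d d' hbq]
          refine Finset.sum_congr rfl fun j _ => ?_
          have hj := j.isLt
          split_ifs <;>
            first
              | (exfalso; omega)
              | (refine congrArg₂ (· * ·) ?_ ?_ <;> exact congrArg _ (by omega))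
              | simp
        rw [key c c', key c' c]
        by_cases hab : (a:ℕ) < (b:ℕ)
        · rw [if_pos hab, if_pos hab]
          exact conv_symm c c' _ (by omega)
        · rw [if_neg hab, if_neg hab]
      · refine Eq.trans (Finset.sum_eq_zero fun j _ => ?_)
          (Finset.sum_eq_zero fun j _ => ?_).symm <;> simp [hbq]
    | inr b =>
      simp only [hX1, hY1, hX2, hY2, zero_mul, mul_zero, Finset.sum_const_zero, add_zero, zero_add]
  | inr a =>
    cases cd with
    | inl b =>
      simp only [hX1, hY1, hX2, hY2, zero_mul, mul_zero, Finset.sum_const_zero, add_zero, zero_add]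
    | inr b =>
      simp only [hX2, hY2, hX3, hY3, hX4, hY4, zero_mul, mul_zero, Finset.sum_const_zero,
        add_zero, zero_add]
      have key : ∀ (d d' : ℕ → F),
          (∑ j : Fin p, (if (a:ℕ) < (j:ℕ) ∧ (j:ℕ) ≤ q then d ((j:ℕ) - a - 1) else 0) *
            (if (j:ℕ) ≤ (b:ℕ) then d' ((b:ℕ) - j) else 0))
          = if (a:ℕ)+1 < (b:ℕ)+1 then
              ∑ t ∈ Finset.range ((b:ℕ)+1 - (a+1)), d t * d' ((b:ℕ)+1 - (a+1) - 1 - t) else 0 := by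
        intro d d'
        have hb := b.isLt
        have h0 := sum_fin_conv p ((a:ℕ)+1) ((b:ℕ)+1) d d' (by omega : (b:ℕ)+1 ≤ p)
        rw [← h0]
        refine Finset.sum_congr rfl fun j _ => ?_
        have hj := j.isLt
        have hb := b.isLt
        split_ifs <;>
          first
            | (exfalso; omega)
            | (refine congrArg₂ (· * ·) ?_ ?_ <;> exact congrArg _ (by omega))
            | simp
      rw [key c c', key c' c]
      by_cases hab : (a:ℕ)+1 < (b:ℕ)+1
      · rw [if_pos hab, if_pos hab]
        exact conv_symm c c' _ (by omega)
      · rw [if_neg hab, if_neg hab]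

end Aux

section Struct
variable {F : Type*} [Field F] [CharZero F] {p q : ℕ}

lemma self_eq_neg_imp {x : F} (h : x = -x) : x = 0 := by
  have h2 : (2:F) * x = 0 := by linear_combination h
  rcases mul_eq_zero.mp h2 with h3 | h3
  · exact absurd h3 two_ne_zero
  · exact h3

-- ∑ with a delta factor on the left, condition `t = j`
lemma sum_deltaL {m : ℕ} (f : Fin m → F) (t : ℕ) :
    ∑ j : Fin m, (if t = (j:ℕ) then (1:F) else 0) * f j
      = if h : t < m then f ⟨t, h⟩ else 0 := by
  by_cases h : t < m
  · rw [dif_pos h, Finset.sum_eq_single ⟨t, h⟩]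
    · simp
    · intro j _ hj
      rw [if_neg, zero_mul]
      exact fun hc => hj (Fin.ext hc.symm)
    · simp
  · rw [dif_neg h]
    refine Finset.sum_eq_zero fun j _ => ?_
    rw [if_neg, zero_mul]
    exact fun hc => h (hc ▸ j.isLt)

-- condition `j = t`, delta on left
lemma sum_deltaL' {m : ℕ} (f : Fin m → F) (t : ℕ) :
    ∑ j : Fin m, (if (j:ℕ) = t then (1:F) else 0) * f j
      = if h : t < m then f ⟨t, h⟩ else 0 := by
  rw [← sum_deltaL f t]
  refine Finset.sum_congr rfl fun j _ => ?_
  congr 1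
  simp [eq_comm]

-- condition `j = t`, delta on right
lemma sum_deltaR {m : ℕ} (f : Fin m → F) (t : ℕ) :
    ∑ j : Fin m, f j * (if (j:ℕ) = t then (1:F) else 0)
      = if h : t < m then f ⟨t, h⟩ else 0 := by
  rw [← sum_deltaL' f t]
  exact Finset.sum_congr rfl fun j _ => mul_comm _ _

-- condition `t = j + 1`, delta on right
lemma sum_deltaR' {m : ℕ} (f : Fin m → F) (t : ℕ) :
    ∑ j : Fin m, f j * (if t = (j:ℕ)+1 then (1:F) else 0)
      = if h : 1 ≤ t ∧ t - 1 < m then f ⟨t-1, h.2⟩ else 0 := by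
  by_cases h : 1 ≤ t ∧ t - 1 < m
  · rw [dif_pos h, Finset.sum_eq_single ⟨t-1, h.2⟩]
    · simp only [Fin.val_mk]
      rw [if_pos (by omega), mul_one]
    · intro j _ hj
      rw [if_neg, mul_zero]
      intro hc
      exact hj (Fin.ext (by simp only [Fin.val_mk]; omega))
    · simp
  · rw [dif_neg h]
    refine Finset.sum_eq_zero fun j _ => ?_
    rw [if_neg, mul_zero]
    have := j.isLt
    omega

lemma structA (hq : 0 < q) (hpq : q ≤ p)
    (X : Matrix (Fin p ⊕ Fin q) (Fin p ⊕ Fin q) F)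
    (hI : (Matrix.fromBlocks 1 0 0 (-1) : Matrix (Fin p ⊕ Fin q) (Fin p ⊕ Fin q) F) * X *
        Matrix.fromBlocks 1 0 0 (-1) = -X)
    (he : (Matrix.fromBlocks 0
          (fun (i : Fin p) (j : Fin q) => if (i:ℕ) = (j:ℕ) then (1:F) else 0)
          (fun (i : Fin q) (j : Fin p) => if (j:ℕ) = (i:ℕ)+1 then (1:F) else 0) 0) * X
        = X * (Matrix.fromBlocks 0
          (fun (i : Fin p) (j : Fin q) => if (i:ℕ) = (j:ℕ) then (1:F) else 0)
          (fun (i : Fin q) (j : Fin p) => if (j:ℕ) = (i:ℕ)+1 then (1:F) else 0) 0)) :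
    ∃ c : ℕ → F, IsStruct q X c := by
  have hp0 : 0 < p := lt_of_lt_of_le hq hpq
  set A : Matrix (Fin p) (Fin q) F :=
    fun i j => if (i:ℕ) = (j:ℕ) then (1:F) else 0 with hA
  set B : Matrix (Fin q) (Fin p) F :=
    fun i j => if (j:ℕ) = (i:ℕ)+1 then (1:F) else 0 with hB
  set C := X.toBlocks₁₂ with hCdef
  set D := X.toBlocks₂₁ with hDdef
  have hXb : X = Matrix.fromBlocks (X.toBlocks₁₁) C D (X.toBlocks₂₂) :=
    (Matrix.fromBlocks_toBlocks X).symm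
  -- diagonal blocks vanish
  rw [hXb] at hI
  rw [Matrix.fromBlocks_multiply, Matrix.fromBlocks_multiply, Matrix.fromBlocks_neg] at hI
  simp only [Matrix.one_mul, Matrix.mul_one, Matrix.zero_mul, Matrix.mul_zero,
    Matrix.neg_mul, Matrix.mul_neg, add_zero, zero_add, neg_neg] at hI
  have h11 := congrArg Matrix.toBlocks₁₁ hI
  have h22 := congrArg Matrix.toBlocks₂₂ hI
  simp only [Matrix.toBlocks_fromBlocks₁₁, Matrix.toBlocks_fromBlocks₂₂] at h11 h22
  have hX11 : X.toBlocks₁₁ = 0 := by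
    ext i j
    exact self_eq_neg_imp (by simpa using congrFun (congrFun h11 i) j)
  have hX22 : X.toBlocks₂₂ = 0 := by
    ext i j
    exact self_eq_neg_imp (by simpa using congrFun (congrFun h22 i) j)
  -- block equations from commuting with e
  rw [hXb, hX11, hX22] at he
  rw [Matrix.fromBlocks_multiply, Matrix.fromBlocks_multiply] at he
  simp only [Matrix.zero_mul, Matrix.mul_zero, add_zero, zero_add] at he
  have hAD : A * D = C * B := by
    have := congrArg Matrix.toBlocks₁₁ he
    simpa only [Matrix.toBlocks_fromBlocks₁₁] using this
  have hBC : B * C = D * A := by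
    have := congrArg Matrix.toBlocks₂₂ he
    simpa only [Matrix.toBlocks_fromBlocks₂₂] using this
  -- entrywise versions
  have hADe : ∀ (i k : Fin p),
      (if h : (i:ℕ) < q then D ⟨(i:ℕ), h⟩ k else 0)
        = if h : 1 ≤ (k:ℕ) ∧ (k:ℕ) - 1 < q then C i ⟨(k:ℕ)-1, h.2⟩ else 0 := by
    intro i k
    have h := congrFun (congrFun hAD i) k
    rw [Matrix.mul_apply, Matrix.mul_apply] at h
    rw [← sum_deltaL (fun j => D j k) (i:ℕ), ← sum_deltaR' (fun j => C i j) (k:ℕ)]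
    exact h
  have hBCe : ∀ (i : Fin q) (j : Fin q),
      (if h : (i:ℕ)+1 < p then C ⟨(i:ℕ)+1, h⟩ j else 0)
        = if h : (j:ℕ) < p then D i ⟨(j:ℕ), h⟩ else 0 := by
    intro i j
    have h := congrFun (congrFun hBC i) j
    rw [Matrix.mul_apply, Matrix.mul_apply] at h
    rw [← sum_deltaL' (fun k => C k j) ((i:ℕ)+1), ← sum_deltaR (fun k => D i k) (j:ℕ)]
    exact h
  -- R1: formula for D in terms of C
  have R1 : ∀ (i : Fin q) (k : Fin p),
      D i k = if h : 1 ≤ (k:ℕ) ∧ (k:ℕ) - 1 < q then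
        C ⟨(i:ℕ), lt_of_lt_of_le i.isLt hpq⟩ ⟨(k:ℕ)-1, h.2⟩ else 0 := by
    intro i k
    have h := hADe ⟨(i:ℕ), lt_of_lt_of_le i.isLt hpq⟩ k
    simp only [Fin.val_mk, Fin.eta] at h
    rw [dif_pos i.isLt] at h
    exact h
  -- F1: rows ≥ q of C vanish
  have F1 : ∀ (i : Fin p), q ≤ (i:ℕ) → ∀ j : Fin q, C i j = 0 := by
    intro i hi j
    have hj := j.isLt
    have hqp : q < p := lt_of_le_of_lt hi i.isLt
    have h := hADe i ⟨(j:ℕ)+1, by omega⟩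
    simp only [Fin.val_mk] at h
    rw [dif_neg (show ¬((i:ℕ) < q) by omega)] at h
    rw [dif_pos (show 1 ≤ (j:ℕ)+1 ∧ (j:ℕ)+1-1 < q by omega)] at h
    exact (congrArg (C i) (Fin.ext (by simp only [Fin.val_mk]; omega))).trans h.symm
  -- F2: recursion
  have F2 : ∀ (i : ℕ) (hi : i < q) (hi1 : i+1 < p) (j : Fin q),
      C ⟨i+1, hi1⟩ j = if h : 1 ≤ (j:ℕ) then
        C ⟨i, lt_of_lt_of_le hi hpq⟩ ⟨(j:ℕ)-1, by omega⟩ else 0 := by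
    intro i hi hi1 j
    have hj := j.isLt
    have h := hBCe ⟨i, hi⟩ j
    simp only [Fin.val_mk] at h
    rw [dif_pos hi1, dif_pos (show (j:ℕ) < p from lt_of_lt_of_le hj hpq)] at h
    rw [R1] at h
    simp only [Fin.val_mk, Fin.eta] at h
    by_cases hj1 : 1 ≤ (j:ℕ)
    · rw [dif_pos hj1]
      rw [dif_pos (show 1 ≤ (j:ℕ) ∧ (j:ℕ)-1 < q by omega)] at h
      exact h
    · rw [dif_neg hj1]
      rw [dif_neg (show ¬(1 ≤ (j:ℕ) ∧ (j:ℕ)-1 < q) from fun hh => hj1 hh.1)] at h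
      exact h
  -- Toeplitz form
  have Tform : ∀ (N : ℕ) (i : Fin p), (i:ℕ) = N → ∀ j : Fin q,
      C i j = if (i:ℕ) ≤ (j:ℕ) then
        (if h : (j:ℕ) - (i:ℕ) < q then C ⟨0, hp0⟩ ⟨(j:ℕ) - (i:ℕ), h⟩ else 0) else 0 := by
    intro N
    induction N with
    | zero =>
      intro i hi j
      have hieq : i = ⟨0, hp0⟩ := Fin.ext hi
      subst hieq
      simp only [Fin.val_mk, Nat.sub_zero]
      rw [if_pos (Nat.zero_le _), dif_pos j.isLt, Fin.eta]
    | succ N ih =>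
      intro i hi j
      have hj := j.isLt
      by_cases hNq : N < q
      · have hi1 : N + 1 < p := hi ▸ i.isLt
        have hieq : i = ⟨N+1, hi1⟩ := Fin.ext hi
        subst hieq
        simp only [Fin.val_mk]
        rw [F2 N hNq hi1 j]
        by_cases hj1 : 1 ≤ (j:ℕ)
        · rw [dif_pos hj1]
          rw [ih ⟨N, lt_of_lt_of_le hNq hpq⟩ rfl ⟨(j:ℕ)-1, by omega⟩]
          simp only [Fin.val_mk]
          by_cases hNj : N + 1 ≤ (j:ℕ)
          · rw [if_pos (show N ≤ (j:ℕ)-1 by omega), if_pos hNj]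
            rw [show (j:ℕ) - 1 - N = (j:ℕ) - (N+1) by omega]
          · rw [if_neg (show ¬(N ≤ (j:ℕ)-1) by omega), if_neg hNj]
        · rw [dif_neg hj1, if_neg (by omega)]
      · have hqi : q ≤ (i:ℕ) := by omega
        rw [F1 i hqi j, if_neg (by omega)]
  -- assemble
  refine ⟨fun t => if h : t < q then C ⟨0, hp0⟩ ⟨t, h⟩ else 0, ?_, ?_, ?_, ?_⟩
  · intro a b
    exact congrFun (congrFun hX11 a) b
  · intro a b
    exact congrFun (congrFun hX22 a) b
  · intro a b
    exact Tform (a:ℕ) a rfl b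
  · intro a b
    show D a b = _
    rw [R1 a b]
    by_cases hab : 1 ≤ (b:ℕ) ∧ (b:ℕ) - 1 < q
    · rw [dif_pos hab, Tform (a:ℕ) ⟨(a:ℕ), lt_of_lt_of_le a.isLt hpq⟩ rfl ⟨(b:ℕ)-1, hab.2⟩]
      simp only [Fin.val_mk]
      by_cases h2 : (a:ℕ) < (b:ℕ)
      · rw [if_pos (show (a:ℕ) ≤ (b:ℕ)-1 by omega),
          if_pos (show (a:ℕ) < (b:ℕ) ∧ (b:ℕ) ≤ q from ⟨h2, by omega⟩)]
        rw [show (b:ℕ) - 1 - (a:ℕ) = (b:ℕ) - (a:ℕ) - 1 by omega]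
      · rw [if_neg (show ¬((a:ℕ) ≤ (b:ℕ)-1) by omega),
          if_neg (show ¬((a:ℕ) < (b:ℕ) ∧ (b:ℕ) ≤ q) from fun hh => h2 hh.1)]
    · rw [dif_neg hab,
        if_neg (show ¬((a:ℕ) < (b:ℕ) ∧ (b:ℕ) ≤ q) from fun hh => hab ⟨by omega, by omega⟩)]

end Struct

/-- the centralizer of e in the (−1)-eigenspace V of conjugation by
I_{p,q} on 𝔤𝔩_{p+q}(F) is abelian: any two elements of V commuting with e commute
with each other. -/
theorem gl_centralizer_is_abelian
    (F : Type*) [Field F] [CharZero F] (p q : ℕ) (hq : 0 < q) (hpq : q ≤ p) :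
    let n := Fin p ⊕ Fin q
    let Ipq : Matrix n n F := Matrix.fromBlocks 1 0 0 (-1)
    let A : Matrix (Fin p) (Fin q) F := fun i j => if (i : ℕ) = (j : ℕ) then 1 else 0
    let B : Matrix (Fin q) (Fin p) F := fun i j => if (j : ℕ) = (i : ℕ) + 1 then 1 else 0
    let e : Matrix n n F := Matrix.fromBlocks 0 A B 0
    ∀ X Y : Matrix n n F,
      Ipq * X * Ipq = -X → e * X = X * e →
      Ipq * Y * Ipq = -Y → e * Y = Y * e →
      X * Y = Y * X := by
  intro n Ipq A B e X Y hIX heX hIY heY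
  obtain ⟨c, hc⟩ := structA hq hpq X hIX heX
  obtain ⟨c', hc'⟩ := structA hq hpq Y hIY heY
  exact commute_of_struct hpq X Y hc hc'
end
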